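/- arXiv:1308.6025 — 10 statements merged into one kernel-verified Lean document; each statement's English description precedes it below -/
import Mathlib

section
/- Let P = {p_1, ..., p_k} be a finite set of strictly positive real numbers such that for every i ∈ {1, ..., n} there exists a subset B_i ⊆ {1, ..., k} with Σ_{j ∈ B_i} p_j = 2^{-i}. Then k ≥ n. -/
lemma geom_tail_lt (m : ℕ) (T : Finset ℕ) (hT : ∀ i ∈ T, m ≤ i) :
    ∑ i ∈ T, (1/2:ℝ)^(i+1) < (1/2:ℝ)^m := by
  rcases T.eq_empty_or_nonempty with rfl | hne
  · simp [pow_pos]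
  · set N := T.max' hne + 1 with hN
    have hsub : T ⊆ Finset.Ico m N := by
      intro i hi
      exact Finset.mem_Ico.mpr ⟨hT i hi, Nat.lt_succ_of_le (Finset.le_max' T i hi)⟩
    have h1 : ∑ i ∈ T, (1/2:ℝ)^(i+1) ≤ ∑ i ∈ Finset.Ico m N, (1/2:ℝ)^(i+1) :=
      Finset.sum_le_sum_of_subset_of_nonneg hsub (fun i _ _ => by positivity)
    have hmN : m ≤ N := le_trans (hT _ (T.max'_mem hne)) (Nat.le_succ _)
    have h2 : ∑ i ∈ Finset.Ico m N, (1/2:ℝ)^(i+1) = (1/2:ℝ)^m - (1/2:ℝ)^N := by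
      have := geom_sum_Ico (x := (1/2:ℝ)) (by norm_num) hmN
      calc ∑ i ∈ Finset.Ico m N, (1/2:ℝ)^(i+1)
          = (1/2:ℝ) * ∑ i ∈ Finset.Ico m N, (1/2:ℝ)^i := by
            rw [Finset.mul_sum]; exact Finset.sum_congr rfl fun i _ => by ring
        _ = (1/2:ℝ) * (((1/2:ℝ)^N - (1/2:ℝ)^m) / ((1/2:ℝ) - 1)) := by rw [this]
        _ = (1/2:ℝ)^m - (1/2:ℝ)^N := by ring
    have : (0:ℝ) < (1/2:ℝ)^N := by positivity
    linarith

/-- If a family of `k` positive reals generates every value `2^{-i}`,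
    `i = 1, …, n`, as a subset sum, then `k ≥ n`. -/
theorem subset_sums_powers_lower_bound (n k : ℕ) (p : Fin k → ℝ)
    (hp : ∀ j, 0 < p j)
    (h : ∀ i ∈ Finset.Icc 1 n, ∃ B : Finset (Fin k),
      ∑ j ∈ B, p j = (2 : ℝ) ^ (-(i : ℤ))) :
    k ≥ n := by
  have hB : ∀ i : Fin n, ∃ B : Finset (Fin k),
      ∑ j ∈ B, p j = (1/2 : ℝ) ^ ((i : ℕ) + 1) := by
    intro i
    obtain ⟨B, hBe⟩ := h ((i : ℕ) + 1)
      (Finset.mem_Icc.mpr ⟨Nat.succ_le_succ (Nat.zero_le _), i.isLt⟩)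
    refine ⟨B, hBe.trans ?_⟩
    rw [one_div, inv_pow, zpow_neg, ← zpow_natCast (2:ℝ) ((i:ℕ)+1)]
  choose B hBsum using hB
  have li : LinearIndependent (ZMod 2) (fun i : Fin n => fun j : Fin k =>
      (if j ∈ B i then 1 else 0 : ZMod 2)) := by
    rw [Fintype.linearIndependent_iff]
    intro g hg
    by_contra hne
    push_neg at hne
    obtain ⟨i0, hi0⟩ := hne
    set S : Finset (Fin n) := Finset.univ.filter (fun i => g i ≠ 0) with hS
    have hSne : S.Nonempty := ⟨i0, by simp [hS, hi0]⟩
    set m := S.min' hSne with hm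
    have hmS : m ∈ S := S.min'_mem hSne
    have hg1 : ∀ i ∈ S, g i = 1 := by
      intro i hi
      exact (by decide : ∀ x : ZMod 2, x ≠ 0 → x = 1) _ (Finset.mem_filter.mp hi).2
    -- parity of covering counts
    have hcount : ∀ j : Fin k, 2 ∣ (S.filter (fun i => j ∈ B i)).card := by
      intro j
      have hj := congrFun hg j
      simp only [Finset.sum_apply, Pi.smul_apply, smul_eq_mul, Pi.zero_apply] at hj
      have hsum : ∑ i ∈ S, (if j ∈ B i then (1:ZMod 2) else 0) = 0 := by
        calc ∑ i ∈ S, (if j ∈ B i then (1:ZMod 2) else 0)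
            = ∑ i ∈ S, g i * (if j ∈ B i then (1:ZMod 2) else 0) :=
              Finset.sum_congr rfl fun i hi => by rw [hg1 i hi, one_mul]
          _ = ∑ i : Fin n, g i * (if j ∈ B i then (1:ZMod 2) else 0) :=
              Finset.sum_subset (Finset.subset_univ S) (fun i _ hiS => by
                have hgi : g i = 0 := by
                  by_contra hgi
                  exact hiS (Finset.mem_filter.mpr ⟨Finset.mem_univ i, hgi⟩)
                rw [hgi, zero_mul])
          _ = 0 := hj
      rw [Finset.sum_boole] at hsum
      exact (ZMod.natCast_eq_zero_iff _ 2).mp hsum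
    -- the real sum identity
    have key : ∑ i ∈ S, (1/2:ℝ)^((i:ℕ)+1)
        = ∑ j : Fin k, ((S.filter (fun i => j ∈ B i)).card : ℝ) * p j := by
      calc ∑ i ∈ S, (1/2:ℝ)^((i:ℕ)+1) = ∑ i ∈ S, ∑ j ∈ B i, p j :=
            Finset.sum_congr rfl fun i _ => (hBsum i).symm
        _ = ∑ i ∈ S, ∑ j : Fin k, (if j ∈ B i then p j else 0) :=
            Finset.sum_congr rfl fun i _ => by
              rw [← Finset.sum_filter]
              exact Finset.sum_congr (by simp [Finset.filter_mem_eq_inter]) fun _ _ => rfl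
        _ = ∑ j : Fin k, ∑ i ∈ S, (if j ∈ B i then p j else 0) := Finset.sum_comm
        _ = ∑ j : Fin k, ((S.filter (fun i => j ∈ B i)).card : ℝ) * p j := by
            refine Finset.sum_congr rfl fun j _ => ?_
            rw [← Finset.sum_filter, Finset.sum_const, nsmul_eq_mul]
    -- lower bound
    have hlow : (1/2:ℝ)^(m:ℕ)
        ≤ ∑ j : Fin k, ((S.filter (fun i => j ∈ B i)).card : ℝ) * p j := by
      have h2le : ∀ j ∈ B m, (2:ℝ) ≤ ((S.filter (fun i => j ∈ B i)).card : ℝ) := by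
        intro j hj
        have h1 : 1 ≤ (S.filter (fun i => j ∈ B i)).card :=
          Finset.card_pos.mpr ⟨m, Finset.mem_filter.mpr ⟨hmS, hj⟩⟩
        have := hcount j
        have : 2 ≤ (S.filter (fun i => j ∈ B i)).card := by omega
        exact_mod_cast this
      calc (1/2:ℝ)^(m:ℕ) = 2 * (1/2:ℝ)^((m:ℕ)+1) := by ring
        _ = 2 * ∑ j ∈ B m, p j := by rw [hBsum]
        _ = ∑ j ∈ B m, 2 * p j := Finset.mul_sum _ _ _
        _ ≤ ∑ j ∈ B m, ((S.filter (fun i => j ∈ B i)).card : ℝ) * p j :=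
            Finset.sum_le_sum fun j hj =>
              mul_le_mul_of_nonneg_right (h2le j hj) (hp j).le
        _ ≤ ∑ j : Fin k, ((S.filter (fun i => j ∈ B i)).card : ℝ) * p j :=
            Finset.sum_le_sum_of_subset_of_nonneg (Finset.subset_univ _)
              fun j _ _ => mul_nonneg (Nat.cast_nonneg _) (hp j).le
    -- upper bound
    have hup : ∑ i ∈ S, (1/2:ℝ)^((i:ℕ)+1) < (1/2:ℝ)^(m:ℕ) := by
      have himg : ∑ t ∈ S.image Fin.val, (1/2:ℝ)^(t+1)
          = ∑ i ∈ S, (1/2:ℝ)^((i:ℕ)+1) :=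
        Finset.sum_image (fun a _ b _ hab => Fin.val_injective hab)
      rw [← himg]
      refine geom_tail_lt _ _ fun t ht => ?_
      obtain ⟨i, hiS, rfl⟩ := Finset.mem_image.mp ht
      exact S.min'_le i hiS
    rw [key] at hup
    linarith
  have hcard : Fintype.card (Fin n) ≤ Module.finrank (ZMod 2) (Fin k → ZMod 2) :=
    li.fintype_card_le_finrank
  simpa [Module.finrank_fintype_fun_eq_card] using hcard
end

section
/- Let P = {p_1, ..., p_k} be a finite set of strictly positive real numbers such that for every i ∈ {1, ..., n} some subset of P sums to 2^{i-1}. Then for every i ≤ n there exist at least i elements of P that are less than or equal to 2^{i-1}. -/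
lemma sum_biUnion_le_aux {α β : Type*} [DecidableEq β] (p : β → ℝ) (hp : ∀ x, 0 ≤ p x)
    (s : Finset α) (B : α → Finset β) :
    ∑ x ∈ s.biUnion B, p x ≤ ∑ j ∈ s, ∑ x ∈ B j, p x := by
  classical
  induction s using Finset.induction_on with
  | empty => simp
  | @insert a s hj ih =>
    rw [Finset.biUnion_insert, Finset.sum_insert hj]
    have h1 : ∑ x ∈ B a ∪ s.biUnion B, p x + ∑ x ∈ B a ∩ s.biUnion B, p x
        = ∑ x ∈ B a, p x + ∑ x ∈ s.biUnion B, p x := Finset.sum_union_inter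
    have h2 : 0 ≤ ∑ x ∈ B a ∩ s.biUnion B, p x := Finset.sum_nonneg fun x _ => hp x
    linarith

lemma card_aux {k : ℕ} (p : Fin k → ℝ) (hp : ∀ j, 0 < p j) :
    ∀ (m : ℕ) (Q : Finset (Fin k)) (B : ℕ → Finset (Fin k)),
      (∀ j < m, B j ⊆ Q) → (∀ j < m, ∑ x ∈ B j, p x = (2:ℝ) ^ j) → m ≤ Q.card := by
  intro m
  induction m with
  | zero => intro Q B _ _; exact Nat.zero_le _
  | succ m ih =>
    intro Q B hBQ hBs
    have hex : ∃ x ∈ B m, x ∉ (Finset.range m).biUnion B := by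
      by_contra hc
      push_neg at hc
      have hsub : B m ⊆ (Finset.range m).biUnion B := hc
      have h1 : ∑ x ∈ B m, p x ≤ ∑ x ∈ (Finset.range m).biUnion B, p x :=
        Finset.sum_le_sum_of_subset_of_nonneg hsub (fun x _ _ => (hp x).le)
      have h2 : ∑ x ∈ (Finset.range m).biUnion B, p x
          ≤ ∑ j ∈ Finset.range m, ∑ x ∈ B j, p x :=
        sum_biUnion_le_aux p (fun x => (hp x).le) _ _
      have h3 : ∑ j ∈ Finset.range m, ∑ x ∈ B j, p x = ∑ j ∈ Finset.range m, (2:ℝ)^j := by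
        apply Finset.sum_congr rfl
        intro j hj
        exact hBs j (Nat.lt_succ_of_lt (Finset.mem_range.mp hj))
      have h4 : ∑ j ∈ Finset.range m, (2:ℝ)^j = 2^m - 1 := by
        rw [geom_sum_eq (by norm_num : (2:ℝ) ≠ 1)]; ring
      have h5 : ∑ x ∈ B m, p x = (2:ℝ)^m := hBs m (Nat.lt_succ_self m)
      rw [h5] at h1
      rw [h3, h4] at h2
      have : (2:ℝ)^m > 0 := by positivity
      linarith
    obtain ⟨x, hxB, hxU⟩ := hex
    have hxQ : x ∈ Q := hBQ m (Nat.lt_succ_self m) hxB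
    have hle : m ≤ (Q.erase x).card := by
      apply ih (Q.erase x) B
      · intro j hj
        intro y hy
        refine Finset.mem_erase.mpr ⟨?_, hBQ j (Nat.lt_succ_of_lt hj) hy⟩
        rintro rfl
        exact hxU (Finset.mem_biUnion.mpr ⟨j, Finset.mem_range.mpr hj, hy⟩)
      · intro j hj; exact hBs j (Nat.lt_succ_of_lt hj)
    rw [← Finset.card_erase_add_one hxQ]
    omega

/-- If a family of `k` positive reals generates every value `2^{i-1}`,
    `i = 1, …, n`, as a subset sum, then for every `i ≤ n` there are at least `i`
    indices `j` with `p j ≤ 2^{i-1}`. -/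
theorem subset_sums_powers_small_elements (n k : ℕ) (p : Fin k → ℝ)
    (hp : ∀ j, 0 < p j)
    (h : ∀ i ∈ Finset.Icc 1 n, ∃ B : Finset (Fin k),
      ∑ j ∈ B, p j = (2 : ℝ) ^ (i - 1)) :
    ∀ i ∈ Finset.Icc 1 n,
      i ≤ (Finset.univ.filter (fun j : Fin k => p j ≤ (2 : ℝ) ^ (i - 1))).card := by
  intro i hi
  rw [Finset.mem_Icc] at hi
  obtain ⟨hi1, hin⟩ := hi
  choose B hB using h
  set Q := Finset.univ.filter (fun j : Fin k => p j ≤ (2 : ℝ) ^ (i - 1)) with hQ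
  have key : ∀ j < i, ∃ C : Finset (Fin k), C ⊆ Q ∧ ∑ x ∈ C, p x = (2:ℝ)^j := by
    intro j hj
    have hmem : j + 1 ∈ Finset.Icc 1 n := Finset.mem_Icc.mpr ⟨Nat.le_add_left 1 j, by omega⟩
    refine ⟨B (j+1) hmem, ?_, ?_⟩
    · intro x hx
      rw [hQ, Finset.mem_filter]
      refine ⟨Finset.mem_univ x, ?_⟩
      have h1 : p x ≤ ∑ y ∈ B (j+1) hmem, p y :=
        Finset.single_le_sum (fun y _ => (hp y).le) hx
      have h2 : ∑ y ∈ B (j+1) hmem, p y = (2:ℝ)^((j+1)-1) := hB (j+1) hmem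
      have h3 : (2:ℝ)^j ≤ (2:ℝ)^(i-1) := by
        apply pow_le_pow_right₀ (by norm_num); omega
      have h2' : ∑ y ∈ B (j+1) hmem, p y = (2:ℝ)^j := by simpa using hB (j+1) hmem
      exact (h1.trans_eq h2').trans h3
    · simpa using hB (j+1) hmem
  choose C hCQ hCs using key
  classical
  let B' : ℕ → Finset (Fin k) := fun j => if hj : j < i then C j hj else ∅
  apply card_aux p hp i Q B'
  · intro j hj; simp only [B', dif_pos hj]; exact hCQ j hj
  · intro j hj; simp only [B', dif_pos hj]; exact hCs j hj
end

section
/- For any n-player m-action game with payoffs in [0,1] and any ε > 0, if k > ⌊2(ln m + ln n)/ε²⌋ then there exists a multiset of k action profiles such that the uniform distribution over this multiset is an ε-coarse correlated equilibrium. -/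
/-!
By von Neumann's minimax theorem an exact coarse correlated equilibrium `x` exists: a mixture `y`
of the deviations "player `i` switches to `j`" is answered by the product of the conditional laws
`y(· | i)`, against which the expected gain of `y` is zero (Hart–Schmeidler).
Sample `k` profiles i.i.d. from `x`. For each of the `n m` deviations the total gain is a sum of `k`
independent variables in `[-1, 1]` with nonpositive mean, so by Hoeffding's inequality it exceeds
`k ε` with probability at most `exp (-k ε² / 2)`. The bound on `k` says `n m exp (-k ε² / 2) < 1`,
so by a union bound some sample is an `ε`-coarse correlated equilibrium.
-/

open Matrix MeasureTheory ProbabilityTheory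

theorem Matrix.exists_mem_stdSimplex_mulVec_nonpos {A C : Type*} [Fintype A] [Fintype C]
    [Nonempty A] (F : Matrix C A ℝ)
    (h : ∀ y ∈ stdSimplex ℝ C, ∃ x ∈ stdSimplex ℝ A, y ⬝ᵥ F *ᵥ x ≤ 0) :
    ∃ x ∈ stdSimplex ℝ A, ∀ c, (F *ᵥ x) c ≤ 0 := by
  classical
  rcases isEmpty_or_nonempty C with hC | hC
  · exact ⟨_, single_mem_stdSimplex ℝ (Classical.arbitrary A), isEmptyElim⟩
  obtain ⟨a, ha, b, hb, hsaddle⟩ := Sion.exists_isSaddlePointOn (f := fun x y => y ⬝ᵥ F *ᵥ x)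
    ⟨_, single_mem_stdSimplex ℝ (Classical.arbitrary A)⟩ (convex_stdSimplex ℝ A)
    (isCompact_stdSimplex ℝ A)
    (fun y _ => (Continuous.lowerSemicontinuous (by fun_prop)).lowerSemicontinuousOn _)
    (fun y _ => (((dotProductBilin ℝ ℝ y).comp F.mulVecLin).convexOn
      (convex_stdSimplex ℝ A)).quasiconvexOn)
    (convex_stdSimplex ℝ C) ⟨_, single_mem_stdSimplex ℝ (Classical.arbitrary C)⟩
    (isCompact_stdSimplex ℝ C)
    (fun x _ => (Continuous.upperSemicontinuous (by fun_prop)).upperSemicontinuousOn _)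
    (fun x _ => (((dotProductBilin ℝ ℝ).flip (F *ᵥ x)).concaveOn
      (convex_stdSimplex ℝ C)).quasiconcaveOn)
  obtain ⟨x, hx, hbx⟩ := h b hb
  refine ⟨a, ha, fun c => ?_⟩
  have hc : Pi.single c 1 ⬝ᵥ F *ᵥ a ≤ b ⬝ᵥ F *ᵥ x := hsaddle x hx _ (single_mem_stdSimplex ℝ c)
  rw [single_one_dotProduct] at hc
  linarith

theorem exists_mem_stdSimplex_eq_sum_mul {α : Type*} [Fintype α] [Nonempty α] {v : α → ℝ}
    (hv : ∀ j, 0 ≤ v j) : ∃ s ∈ stdSimplex ℝ α, ∀ j, v j = (∑ j', v j') * s j := by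
  classical
  by_cases hS : ∑ j', v j' = 0
  · refine ⟨_, single_mem_stdSimplex ℝ (Classical.arbitrary α), fun j => ?_⟩
    rw [hS, zero_mul, (Finset.sum_eq_zero_iff_of_nonneg fun j _ => hv j).1 hS j (Finset.mem_univ j)]
  · refine ⟨fun j => v j / ∑ j', v j',
      ⟨fun j => div_nonneg (hv j) (Finset.sum_nonneg fun j _ => hv j), ?_⟩,
      fun j => (mul_div_cancel₀ _ hS).symm⟩
    rw [← Finset.sum_div, div_self hS]

section Game

variable {ι α : Type*} [DecidableEq ι]

def deviationGain (u : ι → (ι → α) → ℝ) (i : ι) (j : α) (a : ι → α) : ℝ :=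
  u i (Function.update a i j) - u i a

theorem deviationGain_mem_Icc {u : ι → (ι → α) → ℝ} (hu : ∀ i a, u i a ∈ Set.Icc (0 : ℝ) 1)
    (i : ι) (j : α) (a : ι → α) : deviationGain u i j a ∈ Set.Icc (-1 : ℝ) 1 := by
  have h₁ := hu i (Function.update a i j)
  have h₂ := hu i a
  constructor <;> simp only [deviationGain] <;> linarith [h₁.1, h₁.2, h₂.1, h₂.2]

variable [Fintype ι]

def IsCoarseCorrelatedEquilibrium [Fintype α] (u : ι → (ι → α) → ℝ) (ε : ℝ)
    (x : (ι → α) → ℝ) : Prop :=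
  ∀ i j, ∑ a, deviationGain u i j a * x a ≤ ε

theorem prod_apply_mem_stdSimplex [Fintype α] {σ : ι → α → ℝ}
    (hσ : ∀ i, σ i ∈ stdSimplex ℝ α) :
    (fun a : ι → α => ∏ i, σ i (a i)) ∈ stdSimplex ℝ (ι → α) :=
  ⟨fun a => Finset.prod_nonneg fun i _ => (hσ i).1 _, by
    rw [← Fintype.prod_sum, Finset.prod_eq_one fun i _ => (hσ i).2]⟩

theorem mul_prod_update_eq (σ : ι → α → ℝ) (a : ι → α) (i : ι) (j : α) :
    σ i (a i) * ∏ i', σ i' (Function.update a i j i') = σ i j * ∏ i', σ i' (a i') := by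
  rw [Fintype.prod_eq_mul_prod_compl i, Fintype.prod_eq_mul_prod_compl i (fun i' => σ i' (a i')),
    Function.update_self, Finset.prod_congr rfl fun i' hi' => by
      rw [Function.update_of_ne (by simpa using hi')]]
  ring

/-- Resampling coordinate `i` of a product distribution does not change it. -/
theorem sum_prod_mul_eq_sum_mul_sum_update [Fintype α] {σ : ι → α → ℝ} {i : ι}
    (hσ : ∑ j, σ i j = 1) (h : (ι → α) → ℝ) :
    ∑ a, (∏ i', σ i' (a i')) * h a
      = ∑ j, σ i j * ∑ a, (∏ i', σ i' (a i')) * h (Function.update a i j) := by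
  set w : (ι → α) → ℝ := fun a => ∏ i', σ i' (a i')
  let e : Equiv.Perm ((ι → α) × α) := Function.Involutive.toPerm
    (fun p => (Function.update p.1 i p.2, p.1 i)) fun p => by simp
  calc ∑ a, w a * h a = ∑ p : (ι → α) × α, σ i p.2 * (w p.1 * h p.1) := by
        rw [Fintype.sum_prod_type]
        simp only [← Finset.sum_mul, hσ, one_mul]
    _ = ∑ p : (ι → α) × α,
          σ i (p.1 i) * (w (Function.update p.1 i p.2) * h (Function.update p.1 i p.2)) :=
        (Equiv.sum_comp e fun p => σ i p.2 * (w p.1 * h p.1)).symm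
    _ = _ := by
        rw [Fintype.sum_prod_type, Finset.sum_comm]
        simp only [Finset.mul_sum, ← mul_assoc, w, mul_prod_update_eq]

theorem sum_mul_sum_deviationGain_prod_eq_zero [Fintype α] (u : ι → (ι → α) → ℝ)
    {σ : ι → α → ℝ} (hσ : ∀ i, ∑ j, σ i j = 1) {y : ι × α → ℝ} {s : ι → ℝ}
    (hy : ∀ i j, y (i, j) = s i * σ i j) :
    ∑ c, y c * ∑ a, deviationGain u c.1 c.2 a * ∏ i', σ i' (a i') = 0 := by
  rw [Fintype.sum_prod_type]
  refine Finset.sum_eq_zero fun i _ => ?_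
  calc ∑ j, y (i, j) * ∑ a, deviationGain u i j a * ∏ i', σ i' (a i')
      = s i * (∑ j, σ i j * ∑ a, (∏ i', σ i' (a i')) * u i (Function.update a i j)
          - (∑ j, σ i j) * ∑ a, (∏ i', σ i' (a i')) * u i a) := by
        rw [Finset.sum_mul, mul_sub, Finset.mul_sum, Finset.mul_sum, ← Finset.sum_sub_distrib]
        refine Finset.sum_congr rfl fun j _ => ?_
        simp only [hy, deviationGain, Finset.mul_sum, ← Finset.sum_sub_distrib]
        exact Finset.sum_congr rfl fun a _ => by ring
    _ = 0 := by
        rw [← sum_prod_mul_eq_sum_mul_sum_update (hσ i), hσ i, one_mul, sub_self, mul_zero]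

theorem exists_isCoarseCorrelatedEquilibrium [Fintype α] [Nonempty α] (u : ι → (ι → α) → ℝ) :
    ∃ x ∈ stdSimplex ℝ (ι → α), IsCoarseCorrelatedEquilibrium u 0 x := by
  have hresponse : ∀ y ∈ stdSimplex ℝ (ι × α), ∃ x ∈ stdSimplex ℝ (ι → α),
      y ⬝ᵥ (Matrix.of fun c a => deviationGain u c.1 c.2 a) *ᵥ x ≤ 0 := fun y hy => by
    choose σ hσ hyσ using fun i => exists_mem_stdSimplex_eq_sum_mul fun j => hy.1 (i, j)
    exact ⟨_, prod_apply_mem_stdSimplex hσ,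
      (sum_mul_sum_deviationGain_prod_eq_zero u (fun i => (hσ i).2) fun i j => hyσ i j).le⟩
  obtain ⟨x, hx, hF⟩ := Matrix.exists_mem_stdSimplex_mulVec_nonpos _ hresponse
  exact ⟨x, hx, fun i j => hF (i, j)⟩

end Game

theorem exists_isProbabilityMeasure_integral_eq_sum {Ω : Type*} [Fintype Ω] [MeasurableSpace Ω]
    [MeasurableSingletonClass Ω] {x : Ω → ℝ} (hx : x ∈ stdSimplex ℝ Ω) :
    ∃ μ : Measure Ω, IsProbabilityMeasure μ ∧ ∀ f : Ω → ℝ, ∫ ω, f ω ∂μ = ∑ ω, f ω * x ω := by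
  let p := PMF.ofFintype (fun ω => ENNReal.ofReal (x ω)) (by
    rw [← ENNReal.ofReal_sum_of_nonneg fun ω _ => hx.1 ω, hx.2, ENNReal.ofReal_one])
  refine ⟨p.toMeasure, inferInstance, fun f => ?_⟩
  rw [PMF.integral_eq_sum]
  exact Finset.sum_congr rfl fun ω _ => by simp [p, ENNReal.toReal_ofReal (hx.1 ω), mul_comm]

theorem exists_forall_sum_le_of_integral_nonpos {Ω C : Type*} [MeasurableSpace Ω] [Fintype C]
    (μ : Measure Ω) [IsProbabilityMeasure μ] (f : C → Ω → ℝ)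
    (hf_meas : ∀ c, AEMeasurable (f c) μ) (hf_mem : ∀ c, ∀ᵐ ω ∂μ, f c ω ∈ Set.Icc (-1) 1)
    (hf_int : ∀ c, μ[f c] ≤ 0) {k : ℕ} {ε : ℝ} (hε : 0 ≤ ε)
    (hk : Fintype.card C * Real.exp (-(k * ε ^ 2 / 2)) < 1) :
    ∃ D : Fin k → Ω, ∀ c, ∑ l, f c (D l) ≤ k * ε := by
  set ν := Measure.pi fun _ : Fin k => μ
  set bad : C → Set (Fin k → Ω) := fun c => {D | k * ε ≤ ∑ l, (f c (D l) - μ[f c])}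
  have hoeffding (c : C) : ν.real (bad c) ≤ Real.exp (-(k * ε ^ 2 / 2)) := by
    have hsubG := hasSubgaussianMGF_of_mem_Icc (hf_meas c) (hf_mem c)
    have heval (l : Fin k) := measurePreserving_eval (fun _ : Fin k => μ) l
    have h := HasSubgaussianMGF.measure_sum_ge_le_of_iIndepFun (s := Finset.univ)
      (iIndepFun_pi (μ := fun _ : Fin k => μ) fun _ => (hf_meas c).sub_const _)
      (fun l _ => (by rwa [(heval l).map_eq] : HasSubgaussianMGF _ _ (ν.map _)).of_map
        (heval l).measurable.aemeasurable)
      (mul_nonneg k.cast_nonneg hε)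
    refine h.trans_eq (congrArg Real.exp ?_)
    rcases eq_or_ne k 0 with rfl | hk0
    · simp
    · norm_num
      field_simp
  have hbad : ν.real (⋃ c, bad c) < 1 :=
    calc _ ≤ ∑ c, ν.real (bad c) := measureReal_iUnion_fintype_le _
      _ ≤ ∑ c : C, Real.exp (-(k * ε ^ 2 / 2)) := Finset.sum_le_sum fun c _ => hoeffding c
      _ < 1 := by simpa using hk
  obtain ⟨D, hD⟩ : (⋃ c, bad c)ᶜ.Nonempty := by
    rw [Set.nonempty_compl]
    rintro h
    simp [h] at hbad
  refine ⟨D, fun c => ?_⟩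
  have hc : ∑ l, f c (D l) - k * μ[f c] < k * ε := by
    simpa [bad, Finset.sum_sub_distrib] using fun h => hD (Set.mem_iUnion.mpr ⟨c, h⟩)
  nlinarith [hf_int c]

theorem exists_kUniform_epsCCE_general (n m : ℕ) (hm : 0 < m)
    (u : Fin n → (Fin n → Fin m) → ℝ)
    (hu : ∀ i a, u i a ∈ Set.Icc (0 : ℝ) 1)
    (ε : ℝ) (hε : 0 < ε)
    (k : ℕ) (hk : (k : ℤ) > ⌊2 * (Real.log m + Real.log n) / ε ^ 2⌋) :
    ∃ D : Fin k → (Fin n → Fin m),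
      ∀ i : Fin n, ∀ j : Fin m,
        (∑ l : Fin k, (u i (Function.update (D l) i j) - u i (D l))) / k ≤ ε := by
  have : Nonempty (Fin m) := ⟨⟨0, hm⟩⟩
  obtain ⟨x, hx, hcce⟩ := exists_isCoarseCorrelatedEquilibrium u
  obtain ⟨μ, hμ, hμx⟩ := exists_isProbabilityMeasure_integral_eq_sum hx
  have hlog : Real.log m + Real.log n < k * ε ^ 2 / 2 := by
    have := Int.floor_lt.mp hk
    rw [Int.cast_natCast, div_lt_iff₀ (by positivity)] at this
    linarith
  have hunion : (Fintype.card (Fin n × Fin m) : ℝ) * Real.exp (-(k * ε ^ 2 / 2)) < 1 :=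
    calc _ ≤ Real.exp (Real.log n) * Real.exp (Real.log m) * Real.exp (-(k * ε ^ 2 / 2)) := by
          rw [Fintype.card_prod, Fintype.card_fin, Fintype.card_fin, Nat.cast_mul]
          gcongr <;> exact Real.le_exp_log _
      _ = Real.exp (Real.log m + Real.log n - k * ε ^ 2 / 2) := by
          rw [← Real.exp_add, ← Real.exp_add]; ring_nf
      _ < 1 := Real.exp_lt_one_iff.mpr (by linarith)
  obtain ⟨D, hD⟩ := exists_forall_sum_le_of_integral_nonpos μ (fun c => deviationGain u c.1 c.2)
    (fun _ => (measurable_of_finite _).aemeasurable)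
    (fun _ => ae_of_all _ fun _ => deviationGain_mem_Icc hu _ _ _)
    (fun c => (hμx _).trans_le (hcce c.1 c.2)) hε.le hunion
  exact ⟨D, fun i j => div_le_of_le_mul₀ k.cast_nonneg hε.le ((hD (i, j)).trans_eq (mul_comm _ _))⟩

/-- Every n-player m-action game with payoffs in [0,1] admits a k-uniform
    ε-coarse correlated equilibrium whenever `k > ⌊2(ln m + ln n)/ε²⌋`. -/
theorem exists_kUniform_epsCCE (n m : ℕ) (hn : 0 < n) (hm : 0 < m)
    (u : Fin n → (Fin n → Fin m) → ℝ)
    (hu : ∀ i a, u i a ∈ Set.Icc (0 : ℝ) 1)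
    (ε : ℝ) (hε : 0 < ε)
    (k : ℕ) (hk : (k : ℤ) > ⌊2 * (Real.log m + Real.log n) / ε ^ 2⌋) :
    ∃ D : Fin k → (Fin n → Fin m),
      ∀ i : Fin n, ∀ j : Fin m,
        (∑ l : Fin k, (u i (Function.update (D l) i j) - u i (D l))) / k ≤ ε :=
  exists_kUniform_epsCCE_general n m hm u hu ε hε k hk
end

section
/- Let σ ∈ Δ(A) be an exact correlated equilibrium of an n-player m-action game with payoffs in [0,1]. If k > ⌊2(m ln m + ln n + ln 2)/ε²⌋ and k action profiles are sampled i.i.d. from σ, then with probability at least 1/2 the uniform (empirical) distribution over the samples is an ε-correlated equilibrium. -/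
open Finset Classical

/-- Convexity bound: for `x ∈ [-1,1]` and `t ≥ 0`, `exp (t*x) ≤ cosh t + x * sinh t`. -/
lemma exp_mul_le_cosh_add_sinh {t x : ℝ} (hx : |x| ≤ 1) :
    Real.exp (t * x) ≤ Real.cosh t + x * Real.sinh t := by
  rw [abs_le] at hx
  have h := convexOn_exp.2 (Set.mem_univ (-t)) (Set.mem_univ t)
    (show (0:ℝ) ≤ (1 - x) / 2 by linarith) (show (0:ℝ) ≤ (1 + x) / 2 by linarith)
    (show (1 - x) / 2 + (1 + x) / 2 = 1 by ring)
  simp only [smul_eq_mul] at h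
  have he : (1 - x) / 2 * (-t) + (1 + x) / 2 * t = t * x := by ring
  rw [he] at h
  calc Real.exp (t * x) ≤ (1 - x) / 2 * Real.exp (-t) + (1 + x) / 2 * Real.exp t := h
    _ = Real.cosh t + x * Real.sinh t := by
        rw [Real.cosh_eq, Real.sinh_eq]; ring

/-- Finitary Chernoff–Hoeffding bound for i.i.d. samples from a finite distribution. -/
lemma chernoff_bound {A : Type*} [Fintype A] (σ : A → ℝ) (hσ0 : ∀ a, 0 ≤ σ a)
    (hσ1 : ∑ a, σ a = 1) (g : A → ℝ) (hg : ∀ a, |g a| ≤ 1)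
    (hmean : ∑ a, g a * σ a ≤ 0) (ε : ℝ) (hε : 0 < ε) (k : ℕ) :
    ∑ D : Fin k → A, (if (k : ℝ) * ε < ∑ l, g (D l) then ∏ l, σ (D l) else 0)
      ≤ Real.exp (-(k * ε ^ 2) / 2) := by
  have hprodnn : ∀ D : Fin k → A, 0 ≤ ∏ l, σ (D l) := fun D =>
    Finset.prod_nonneg fun l _ => hσ0 _
  -- pointwise bound by exponential
  have step1 : ∀ D : Fin k → A,
      (if (k : ℝ) * ε < ∑ l, g (D l) then ∏ l, σ (D l) else 0)
        ≤ Real.exp (ε * (∑ l, g (D l)) - k * ε ^ 2) * ∏ l, σ (D l) := by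
    intro D
    split_ifs with h
    · have h1 : (0 : ℝ) ≤ ε * (∑ l, g (D l)) - k * ε ^ 2 := by nlinarith
      nlinarith [Real.one_le_exp h1, hprodnn D, Real.exp_pos (ε * (∑ l, g (D l)) - k * ε ^ 2)]
    · exact mul_nonneg (Real.exp_pos _).le (hprodnn D)
  have step2 : ∑ D : Fin k → A, Real.exp (ε * (∑ l, g (D l)) - k * ε ^ 2) * ∏ l, σ (D l)
      = Real.exp (-(k * ε ^ 2)) * (∑ a, Real.exp (ε * g a) * σ a) ^ k := by
    rw [Fintype.sum_pow, Finset.mul_sum]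
    refine Finset.sum_congr rfl fun D _ => ?_
    rw [sub_eq_add_neg, Real.exp_add, Finset.mul_sum, Real.exp_sum, Finset.prod_mul_distrib]
    ring
  have step3 : ∑ a, Real.exp (ε * g a) * σ a ≤ Real.cosh ε := by
    calc ∑ a, Real.exp (ε * g a) * σ a
        ≤ ∑ a, (Real.cosh ε + g a * Real.sinh ε) * σ a := by
          refine Finset.sum_le_sum fun a _ => mul_le_mul_of_nonneg_right ?_ (hσ0 a)
          exact exp_mul_le_cosh_add_sinh (hg a)
      _ = Real.cosh ε * (∑ a, σ a) + Real.sinh ε * ∑ a, g a * σ a := by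
          rw [Finset.mul_sum, Finset.mul_sum, ← Finset.sum_add_distrib]
          exact Finset.sum_congr rfl fun a _ => by ring
      _ ≤ Real.cosh ε := by
          rw [hσ1, mul_one]
          have : Real.sinh ε * ∑ a, g a * σ a ≤ 0 :=
            mul_nonpos_of_nonneg_of_nonpos (by positivity) hmean
          linarith
  have hsumnn : 0 ≤ ∑ a, Real.exp (ε * g a) * σ a :=
    Finset.sum_nonneg fun a _ => mul_nonneg (Real.exp_pos _).le (hσ0 a)
  calc ∑ D : Fin k → A, (if (k : ℝ) * ε < ∑ l, g (D l) then ∏ l, σ (D l) else 0)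
      ≤ ∑ D : Fin k → A, Real.exp (ε * (∑ l, g (D l)) - k * ε ^ 2) * ∏ l, σ (D l) :=
        Finset.sum_le_sum fun D _ => step1 D
    _ = Real.exp (-(k * ε ^ 2)) * (∑ a, Real.exp (ε * g a) * σ a) ^ k := step2
    _ ≤ Real.exp (-(k * ε ^ 2)) * (Real.cosh ε) ^ k := by
        refine mul_le_mul_of_nonneg_left ?_ (Real.exp_pos _).le
        exact pow_le_pow_left₀ hsumnn step3 k
    _ ≤ Real.exp (-(k * ε ^ 2)) * (Real.exp (ε ^ 2 / 2)) ^ k := by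
        refine mul_le_mul_of_nonneg_left ?_ (Real.exp_pos _).le
        exact pow_le_pow_left₀ (Real.cosh_pos (x := ε)).le (Real.cosh_le_exp_half_sq ε) k
    _ = Real.exp (-(k * ε ^ 2) / 2) := by
        rw [← Real.exp_nat_mul, ← Real.exp_add]
        congr 1; ring

/-- Sampling `k > ⌊2(m ln m + ln n + ln 2)/ε²⌋` profiles i.i.d. from an
    exact correlated equilibrium, with probability at least 1/2 the empirical
    distribution over the samples is an ε-correlated equilibrium. -/
theorem sampling_ce_succeeds_whp (n m : ℕ) (hn : 0 < n) (hm : 0 < m)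
    (u : Fin n → (Fin n → Fin m) → ℝ)
    (hu : ∀ i a, u i a ∈ Set.Icc (0 : ℝ) 1)
    (σ : (Fin n → Fin m) → ℝ)
    (hσ0 : ∀ a, 0 ≤ σ a) (hσ1 : ∑ a, σ a = 1)
    (hCE : ∀ i : Fin n, ∀ f : Fin m → Fin m,
      ∑ a, (u i (Function.update a i (f (a i))) - u i a) * σ a ≤ 0)
    (ε : ℝ) (hε : 0 < ε) (k : ℕ)
    (hk : (k : ℤ) > ⌊2 * ((m : ℝ) * Real.log m + Real.log n + Real.log 2) / ε ^ 2⌋) :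
    (1 : ℝ) / 2 ≤
      ∑ D : Fin k → (Fin n → Fin m),
        (if ∀ i : Fin n, ∀ f : Fin m → Fin m,
            (∑ l : Fin k, (u i (Function.update (D l) i (f (D l i))) - u i (D l))) / k ≤ ε
          then ∏ l : Fin k, σ (D l) else 0) := by
  classical
  -- value of k is strictly bigger than 2(m ln m + ln n + ln 2)/ε²
  have hkR : 2 * ((m : ℝ) * Real.log m + Real.log n + Real.log 2) / ε ^ 2 < (k : ℝ) := by
    have := Int.lt_floor_add_one (2 * ((m : ℝ) * Real.log m + Real.log n + Real.log 2) / ε ^ 2)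
    have h2 : (⌊2 * ((m : ℝ) * Real.log m + Real.log n + Real.log 2) / ε ^ 2⌋ : ℝ) + 1
        ≤ (k : ℝ) := by exact_mod_cast hk
    linarith
  have hxnn : (0:ℝ) ≤ 2 * ((m : ℝ) * Real.log m + Real.log n + Real.log 2) / ε ^ 2 := by
    have h1 : 0 ≤ Real.log m := Real.log_nonneg (by exact_mod_cast hm)
    have h2 : 0 ≤ Real.log n := Real.log_nonneg (by exact_mod_cast hn)
    have h3 : 0 ≤ Real.log 2 := Real.log_nonneg (by norm_num)
    have h4 : 0 ≤ (m : ℝ) * Real.log m := mul_nonneg (Nat.cast_nonneg m) h1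
    have h5 : (0:ℝ) ≤ ε ^ 2 := sq_nonneg ε
    apply div_nonneg _ h5
    linarith
  have hkpos : 0 < k := by
    have hf : (0:ℤ) ≤ ⌊2 * ((m : ℝ) * Real.log m + Real.log n + Real.log 2) / ε ^ 2⌋ :=
      Int.floor_nonneg.mpr hxnn
    exact_mod_cast lt_of_le_of_lt hf hk
  -- the per-constraint regret functions
  set g : Fin n × (Fin m → Fin m) → (Fin n → Fin m) → ℝ :=
    fun p a => u p.1 (Function.update a p.1 (p.2 (a p.1))) - u p.1 a with hg_def
  have hgbd : ∀ p a, |g p a| ≤ 1 := by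
    intro p a
    have h1 := hu p.1 (Function.update a p.1 (p.2 (a p.1)))
    have h2 := hu p.1 a
    simp only [Set.mem_Icc] at h1 h2
    rw [abs_le]
    constructor <;> simp only [hg_def] <;> nlinarith [h1.1, h1.2, h2.1, h2.2]
  have hgmean : ∀ p, ∑ a, g p a * σ a ≤ 0 := fun p => hCE p.1 p.2
  -- Chernoff bound for each constraint
  have hcb : ∀ p : Fin n × (Fin m → Fin m),
      ∑ D : Fin k → (Fin n → Fin m), (if (k : ℝ) * ε < ∑ l, g p (D l) then ∏ l, σ (D l) else 0)
        ≤ Real.exp (-(k * ε ^ 2) / 2) :=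
    fun p => chernoff_bound σ hσ0 hσ1 (g p) (hgbd p) (hgmean p) ε hε k
  have hprodnn : ∀ D : Fin k → (Fin n → Fin m), 0 ≤ ∏ l, σ (D l) := fun D =>
    Finset.prod_nonneg fun l _ => hσ0 _
  -- total mass is 1
  have htot : ∑ D : Fin k → (Fin n → Fin m), ∏ l, σ (D l) = 1 := by
    rw [← Fintype.sum_pow, hσ1, one_pow]
  -- split into good and bad parts
  have hsplit : ∀ D : Fin k → (Fin n → Fin m),
      (if ∀ i : Fin n, ∀ f : Fin m → Fin m,
            (∑ l : Fin k, (u i (Function.update (D l) i (f (D l i))) - u i (D l))) / k ≤ ε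
        then ∏ l : Fin k, σ (D l) else 0)
      = (∏ l, σ (D l)) -
        (if ¬ (∀ i : Fin n, ∀ f : Fin m → Fin m,
            (∑ l : Fin k, (u i (Function.update (D l) i (f (D l i))) - u i (D l))) / k ≤ ε)
          then ∏ l, σ (D l) else 0) := by
    intro D; split_ifs with h h' <;> simp_all
  -- union bound: bad indicator ≤ sum of per-constraint indicators
  have hunion : ∀ D : Fin k → (Fin n → Fin m),
      (if ¬ (∀ i : Fin n, ∀ f : Fin m → Fin m,
            (∑ l : Fin k, (u i (Function.update (D l) i (f (D l i))) - u i (D l))) / k ≤ ε)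
        then ∏ l, σ (D l) else 0)
      ≤ ∑ p : Fin n × (Fin m → Fin m),
          (if (k : ℝ) * ε < ∑ l, g p (D l) then ∏ l, σ (D l) else 0) := by
    intro D
    by_cases h : ∀ i : Fin n, ∀ f : Fin m → Fin m,
        (∑ l : Fin k, (u i (Function.update (D l) i (f (D l i))) - u i (D l))) / k ≤ ε
    · rw [if_neg (not_not_intro h)]
      refine Finset.sum_nonneg fun p _ => ?_
      split_ifs
      exacts [hprodnn D, le_rfl]
    · rw [if_pos h]
      push_neg at h
      obtain ⟨i, f, hif⟩ := h
      have hbad : (k : ℝ) * ε < ∑ l, g (i, f) (D l) := by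
        have hk' : (0 : ℝ) < k := by exact_mod_cast hkpos
        rw [lt_div_iff₀ hk'] at hif
        have : (k : ℝ) * ε = ε * k := by ring
        rw [this]
        simpa [hg_def] using hif
      have : (if (k : ℝ) * ε < ∑ l, g (i, f) (D l) then ∏ l, σ (D l) else 0)
          = ∏ l, σ (D l) := by rw [if_pos hbad]
      calc ∏ l, σ (D l)
          = (if (k : ℝ) * ε < ∑ l, g (i, f) (D l) then ∏ l, σ (D l) else 0) := this.symm
        _ ≤ ∑ p : Fin n × (Fin m → Fin m),
              (if (k : ℝ) * ε < ∑ l, g p (D l) then ∏ l, σ (D l) else 0) := by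
            refine Finset.single_le_sum (f := fun p : Fin n × (Fin m → Fin m) =>
              (if (k : ℝ) * ε < ∑ l, g p (D l) then ∏ l, σ (D l) else 0)) ?_
              (Finset.mem_univ ((i, f) : Fin n × (Fin m → Fin m)))
            intro p _
            split_ifs
            exacts [hprodnn D, le_rfl]
  -- bound total bad probability
  have hbadtot :
      ∑ D : Fin k → (Fin n → Fin m), (if ¬ (∀ i : Fin n, ∀ f : Fin m → Fin m,
            (∑ l : Fin k, (u i (Function.update (D l) i (f (D l i))) - u i (D l))) / k ≤ ε)
          then ∏ l, σ (D l) else 0)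
      ≤ (n : ℝ) * (m : ℝ) ^ m * Real.exp (-(k * ε ^ 2) / 2) := by
    calc _ ≤ ∑ D : Fin k → (Fin n → Fin m), ∑ p : Fin n × (Fin m → Fin m),
            (if (k : ℝ) * ε < ∑ l, g p (D l) then ∏ l, σ (D l) else 0) :=
          Finset.sum_le_sum fun D _ => hunion D
      _ = ∑ p : Fin n × (Fin m → Fin m), ∑ D : Fin k → (Fin n → Fin m),
            (if (k : ℝ) * ε < ∑ l, g p (D l) then ∏ l, σ (D l) else 0) :=
          Finset.sum_comm
      _ ≤ ∑ _p : Fin n × (Fin m → Fin m), Real.exp (-(k * ε ^ 2) / 2) :=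
          Finset.sum_le_sum fun p _ => hcb p
      _ = (n : ℝ) * (m : ℝ) ^ m * Real.exp (-(k * ε ^ 2) / 2) := by
          rw [Finset.sum_const, Finset.card_univ]
          have hcard : Fintype.card (Fin n × (Fin m → Fin m)) = n * m ^ m := by
            simp [Fintype.card_fun]
          rw [hcard, nsmul_eq_mul]
          push_cast
          ring
  -- numeric bound on the failure probability
  have hnum : (n : ℝ) * (m : ℝ) ^ m * Real.exp (-(k * ε ^ 2) / 2) ≤ 1 / 2 := by
    have hek : (k : ℝ) * ε ^ 2 / 2 > (m : ℝ) * Real.log m + Real.log n + Real.log 2 := by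
      have hε2 : (0 : ℝ) < ε ^ 2 := by positivity
      rw [div_lt_iff₀ hε2] at hkR
      linarith
    have hexp : Real.exp (-(k * ε ^ 2) / 2)
        ≤ Real.exp (-((m : ℝ) * Real.log m + Real.log n + Real.log 2)) := by
      apply Real.exp_le_exp.mpr
      have : -(↑k * ε ^ 2) / 2 = -(↑k * ε ^ 2 / 2) := by ring
      rw [this]
      linarith
    have hval : Real.exp (-((m : ℝ) * Real.log m + Real.log n + Real.log 2))
        = 1 / ((m : ℝ) ^ m * n * 2) := by
      rw [Real.exp_neg, Real.exp_add, Real.exp_add]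
      rw [Real.exp_log (by norm_num : (0:ℝ) < 2)]
      rw [Real.exp_log (by exact_mod_cast hn : (0:ℝ) < n)]
      rw [Real.exp_nat_mul, Real.exp_log (by exact_mod_cast hm : (0:ℝ) < m)]
      rw [one_div]
    have hmn : (0:ℝ) < (m : ℝ) ^ m * n * 2 := by positivity
    calc (n : ℝ) * (m : ℝ) ^ m * Real.exp (-(k * ε ^ 2) / 2)
        ≤ (n : ℝ) * (m : ℝ) ^ m * (1 / ((m : ℝ) ^ m * n * 2)) := by
          refine mul_le_mul_of_nonneg_left ?_ (by positivity)
          rw [← hval]; exact hexp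
      _ = 1 / 2 := by field_simp
  -- conclude
  calc (1 : ℝ) / 2 = 1 - 1 / 2 := by norm_num
    _ ≤ 1 - (n : ℝ) * (m : ℝ) ^ m * Real.exp (-(k * ε ^ 2) / 2) := by linarith
    _ ≤ ∑ D : Fin k → (Fin n → Fin m), ((∏ l, σ (D l)) -
          (if ¬ (∀ i : Fin n, ∀ f : Fin m → Fin m,
              (∑ l : Fin k, (u i (Function.update (D l) i (f (D l i))) - u i (D l))) / k ≤ ε)
            then ∏ l, σ (D l) else 0)) := by
        rw [Finset.sum_sub_distrib, htot]
        linarith [hbadtot]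
    _ = _ := by
        refine Finset.sum_congr rfl fun D _ => ?_
        exact (hsplit D).symm
end

section
/- Suppose every n-player m-action game with payoffs in [0,1] admits an (ε/2)-Nash equilibrium in which each player's mixed strategy has support of size at most b. Then every such game admits a k-uniform ε-correlated equilibrium whenever exp(−kε²/8)·n·m^b < 1. -/
/-!
Sample `k` profiles independently from the product distribution of an `(ε/2)`-Nash equilibrium
with supports of size at most `b`. Against a product distribution, every switching rule
`f : [m] → [m]` of player `i` has expected regret at most `ε/2`, because its regret is an average
of regrets of unilateral deviations to pure actions. By Hoeffding's inequality, the empirical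
regret of `f` over the sample exceeds `ε` with probability at most `exp(-kε²/8)`. Since the sample
lies in the support of the equilibrium almost surely, only the `n·m^b` switching rules that move
just the actions in the supports matter, and the union bound leaves a sample that is good for all
of them.
-/

open Finset MeasureTheory ProbabilityTheory Real Function

section ProductSums

variable {ι α : Type*} [Fintype ι] [DecidableEq ι] [Fintype α]

theorem sum_mul_prod_eq_sum_mul_sum_update {R : Type*} [CommSemiring R] (σ : ι → α → R) {i : ι}
    (hσ : ∑ j, σ i j = 1) (F : (ι → α) → R) :
    ∑ a, F a * ∏ l, σ l (a l) = ∑ j, σ i j * ∑ a, F (update a i j) * ∏ l, σ l (a l) := by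
  let w : (ι → α) → R := fun a => ∏ l ∈ univ.erase i, σ l (a l)
  have hprod : ∀ a, ∏ l, σ l (a l) = σ i (a i) * w a :=
    fun a => (mul_prod_erase univ (fun l => σ l (a l)) (mem_univ i)).symm
  have hw : ∀ a j, w (update a i j) = w a := fun a j =>
    prod_congr rfl fun l hl => by rw [update_of_ne (ne_of_mem_erase hl)]
  let e : (ι → α) × α → (ι → α) × α := fun p => (update p.1 i p.2, p.1 i)
  have he : Involutive e := fun p => by simp [e]
  let G : (ι → α) × α → R := fun p => F p.1 * (σ i (p.1 i) * w p.1) * σ i p.2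
  calc ∑ a, F a * ∏ l, σ l (a l) = ∑ p, G p := by
        simp only [G, Fintype.sum_prod_type, ← mul_sum, hσ, mul_one, hprod]
    _ = ∑ p, G (e p) := (Fintype.sum_bijective e he.bijective _ _ fun _ => rfl).symm
    _ = _ := by
        simp only [G, e, Fintype.sum_prod_type, update_self, hw, hprod]
        rw [sum_comm]
        simp only [mul_sum]
        exact sum_congr rfl fun j _ => sum_congr rfl fun a _ => by ring

theorem sum_switch_sub_mul_prod_le {σ : ι → α → ℝ} {i : ι} (hσ0 : ∀ j, 0 ≤ σ i j)
    (hσ1 : ∑ j, σ i j = 1) (v : (ι → α) → ℝ) {δ : ℝ}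
    (hdev : ∀ j, ∑ a, (v (update a i j) - v a) * ∏ l, σ l (a l) ≤ δ) (f : α → α) :
    ∑ a, (v (update a i (f (a i))) - v a) * ∏ l, σ l (a l) ≤ δ := by
  let g : α → ℝ := fun j => ∑ a, v (update a i j) * ∏ l, σ l (a l)
  let V := ∑ a, v a * ∏ l, σ l (a l)
  have hg : ∀ j, g j ≤ V + δ := fun j => by
    have := hdev j
    simp only [sub_mul, sum_sub_distrib] at this
    linarith
  calc ∑ a, (v (update a i (f (a i))) - v a) * ∏ l, σ l (a l)
      = ∑ j, σ i j * g (f j) - V := by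
        have h := sum_mul_prod_eq_sum_mul_sum_update σ hσ1 fun a => v (update a i (f (a i)))
        simp only [update_idem, update_self] at h
        simp only [sub_mul, sum_sub_distrib, h, g, V]
    _ ≤ ∑ j, σ i j * (V + δ) - V := by
        gcongr with j
        · exact hσ0 j
        · exact hg (f j)
    _ = δ := by rw [← sum_mul, hσ1, one_mul]; ring

end ProductSums

section SupportedRules

variable {α : Type*} [Fintype α] [DecidableEq α]

def rulesSupportedOn (B : Finset α) : Finset (α → α) :=
  univ.image fun g : B → α => fun j => if h : j ∈ B then g ⟨j, h⟩ else j

theorem card_rulesSupportedOn_le {B : Finset α} (hB : B.Nonempty) {b : ℕ} (hb : #B ≤ b) :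
    #(rulesSupportedOn B) ≤ Fintype.card α ^ b :=
  card_image_le.trans <| by
    simpa using Nat.pow_le_pow_right (hB.card_pos.trans_le (card_le_univ B)) hb

theorem exists_mem_rulesSupportedOn_eqOn (B : Finset α) (f : α → α) :
    ∃ g ∈ rulesSupportedOn B, ∀ j ∈ B, g j = f j :=
  ⟨_, mem_image_of_mem _ (mem_univ (f ∘ Subtype.val)), fun _ hj => dif_pos hj⟩

end SupportedRules

section MixedStrategy

variable {α : Type*} [Fintype α]

noncomputable def mixedStrategyPMF (p : α → ℝ) (hp0 : ∀ a, 0 ≤ p a) (hp1 : ∑ a, p a = 1) :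
    PMF α :=
  PMF.ofFintype (fun a => ENNReal.ofReal (p a)) (by
    rw [← ENNReal.ofReal_sum_of_nonneg fun a _ => hp0 a, hp1, ENNReal.ofReal_one])

variable [MeasurableSpace α] [MeasurableSingletonClass α]

theorem mixedStrategyPMF_measureReal_singleton {p : α → ℝ} (hp0 : ∀ a, 0 ≤ p a)
    (hp1 : ∑ a, p a = 1) (a : α) :
    (mixedStrategyPMF p hp0 hp1).toMeasure.real {a} = p a := by
  rw [measureReal_def, PMF.toMeasure_apply_singleton _ _ (measurableSet_singleton a)]
  exact ENNReal.toReal_ofReal (hp0 a)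

theorem ae_mixedStrategyPMF_ne_zero {p : α → ℝ} (hp0 : ∀ a, 0 ≤ p a) (hp1 : ∑ a, p a = 1) :
    ∀ᵐ a ∂(mixedStrategyPMF p hp0 hp1).toMeasure, p a ≠ 0 := by
  rw [ae_iff, PMF.toMeasure_apply_eq_zero_iff _ (Set.toFinite _).measurableSet,
    Set.disjoint_left]
  intro a ha hpa
  simp_all [mixedStrategyPMF]

theorem integral_pi_mixedStrategyPMF {ι : Type*} [Fintype ι] [DecidableEq ι] {σ : ι → α → ℝ}
    (hσ0 : ∀ i a, 0 ≤ σ i a) (hσ1 : ∀ i, ∑ a, σ i a = 1) (F : (ι → α) → ℝ) :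
    ∫ a, F a ∂Measure.pi (fun i => (mixedStrategyPMF (σ i) (hσ0 i) (hσ1 i)).toMeasure)
      = ∑ a, F a * ∏ l, σ l (a l) := by
  rw [integral_fintype .of_finite]
  refine sum_congr rfl fun a _ => ?_
  rw [smul_eq_mul, mul_comm, measureReal_def, Measure.pi_singleton, ENNReal.toReal_prod]
  simp_rw [← measureReal_def, mixedStrategyPMF_measureReal_singleton]

end MixedStrategy

section Sampling

theorem MeasureTheory.Measure.ae_pi_forall {ι : Type*} [Fintype ι] {α : ι → Type*}
    [∀ i, MeasurableSpace (α i)] (μ : ∀ i, Measure (α i)) [∀ i, SigmaFinite (μ i)]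
    {p : ∀ i, α i → Prop} (h : ∀ i, ∀ᵐ x ∂μ i, p i x) :
    ∀ᵐ x ∂Measure.pi μ, ∀ i, p i (x i) :=
  Measure.ae_pi_le_pi (Filter.eventually_pi h)

theorem exists_ae_forall_notMem_of_sum_measureReal_lt_one {Ω κ : Type*} [MeasurableSpace Ω]
    (μ : Measure Ω) [IsProbabilityMeasure μ] {q : Ω → Prop} (hq : ∀ᵐ ω ∂μ, q ω)
    (s : Finset κ) (B : κ → Set Ω) (hB : ∑ p ∈ s, μ.real (B p) < 1) :
    ∃ ω, q ω ∧ ∀ p ∈ s, ω ∉ B p := by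
  by_contra! hcover
  have hnull : μ.real {ω | ¬ q ω} = 0 := by
    rw [measureReal_def, ae_iff.1 hq, ENNReal.toReal_zero]
  have huniv : Set.univ ⊆ {ω | ¬ q ω} ∪ ⋃ p ∈ s, B p := by
    intro ω _
    by_cases h : q ω
    · obtain ⟨p, hp, hω⟩ := hcover ω h
      exact Or.inr (Set.mem_biUnion hp hω)
    · exact Or.inl h
  have := calc (1 : ℝ) = μ.real Set.univ := probReal_univ.symm
    _ ≤ μ.real ({ω | ¬ q ω} ∪ ⋃ p ∈ s, B p) := measureReal_mono huniv
    _ ≤ μ.real {ω | ¬ q ω} + ∑ p ∈ s, μ.real (B p) :=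
      (measureReal_union_le _ _).trans (add_le_add_right (measureReal_biUnion_finset_le s B) _)
  linarith

variable {ι A : Type*} [Fintype ι] [MeasurableSpace A] (ν : Measure A) [IsProbabilityMeasure ν]

theorem measureReal_pi_sum_ge_le_of_mem_Icc {X : A → ℝ} (hXm : Measurable X)
    (hX : ∀ a, X a ∈ Set.Icc (-1 : ℝ) 1) {t : ℝ} (ht : 0 ≤ t) :
    (Measure.pi fun _ : ι => ν).real {D | Fintype.card ι * (ν[X] + t) ≤ ∑ l, X (D l)}
      ≤ exp (-(Fintype.card ι * t ^ 2 / 2)) := by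
  set μ := Measure.pi fun _ : ι => ν
  have hindep : iIndepFun (fun l (D : ι → A) => X (D l) - ν[X]) μ :=
    iIndepFun_pi (X := fun _ a => X a - ν[X]) fun _ => (hXm.sub_const _).aemeasurable
  have hsubG : ∀ l, HasSubgaussianMGF (fun D : ι → A => X (D l) - ν[X]) 1 μ := by
    intro l
    have h := hasSubgaussianMGF_of_mem_Icc (μ := μ) (X := fun D => X (D l))
      (hXm.comp (measurable_pi_apply l)).aemeasurable (ae_of_all _ fun D => hX (D l))
    rw [integral_comp_eval hXm.aestronglyMeasurable] at h
    convert h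
    norm_num
  have h := HasSubgaussianMGF.measure_sum_ge_le_of_iIndepFun hindep (s := univ)
    (fun l _ => hsubG l) (ε := Fintype.card ι * t) (by positivity)
  convert h using 2
  · ext D
    simp only [Set.mem_ofPred_eq, sum_sub_distrib, sum_const, card_univ, nsmul_eq_mul]
    constructor <;> intro h <;> linarith
  · push_cast [sum_const, card_univ, nsmul_eq_mul, mul_one]
    rcases eq_or_ne (Fintype.card ι : ℝ) 0 with h0 | h0
    · simp [h0]
    · field_simp

theorem measureReal_pi_sum_gt_le_of_integral_le {X : A → ℝ} (hXm : Measurable X)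
    (hX : ∀ a, X a ∈ Set.Icc (-1 : ℝ) 1) {ε : ℝ} (hε : 0 ≤ ε) (hmean : ν[X] ≤ ε / 2) :
    (Measure.pi fun _ : ι => ν).real {D | Fintype.card ι * ε < ∑ l, X (D l)}
      ≤ exp (-(Fintype.card ι : ℝ) * ε ^ 2 / 8) := by
  have hsub : {D : ι → A | Fintype.card ι * ε < ∑ l, X (D l)}
      ⊆ {D | Fintype.card ι * (ν[X] + ε / 2) ≤ ∑ l, X (D l)} :=
    Set.ofPred_subset_ofPred.2 fun D hD => by
      have : (Fintype.card ι : ℝ) * ν[X] ≤ Fintype.card ι * (ε / 2) := by gcongr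
      linarith
  refine (measureReal_mono hsub).trans
    ((measureReal_pi_sum_ge_le_of_mem_Icc ν hXm hX (by positivity)).trans_eq ?_)
  ring_nf

theorem exists_forall_sum_le_of_integral_le [DiscreteMeasurableSpace A] {κ : Type*}
    {q : A → Prop} (hq : ∀ᵐ a ∂ν, q a) (s : Finset κ) (X : κ → A → ℝ)
    (hX : ∀ p ∈ s, ∀ a, X p a ∈ Set.Icc (-1 : ℝ) 1) {ε : ℝ} (hε : 0 ≤ ε)
    (hmean : ∀ p ∈ s, ν[X p] ≤ ε / 2)
    (hs : exp (-(Fintype.card ι : ℝ) * ε ^ 2 / 8) * #s < 1) :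
    ∃ D : ι → A, (∀ l, q (D l)) ∧ ∀ p ∈ s, ∑ l, X p (D l) ≤ Fintype.card ι * ε := by
  obtain ⟨D, hDq, hD⟩ := exists_ae_forall_notMem_of_sum_measureReal_lt_one
    (Measure.pi fun _ : ι => ν) (Measure.ae_pi_forall _ fun _ => hq) s
    (fun p => {D | Fintype.card ι * ε < ∑ l, X p (D l)}) <| by
      refine lt_of_le_of_lt ?_ hs
      rw [mul_comm _ (#s : ℝ)]
      exact (sum_le_card_nsmul _ _ _ fun p hp => measureReal_pi_sum_gt_le_of_integral_le (ι := ι) ν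
        .of_discrete (hX p hp) hε (hmean p hp)).trans_eq (nsmul_eq_mul _ _)
  exact ⟨D, hDq, fun p hp => not_lt.1 (hD p hp)⟩

end Sampling

/-- If every n-player m-action game with payoffs in [0,1] admits an
    (ε/2)-Nash equilibrium with per-player supports of size at most `b`, then every
    such game admits a k-uniform ε-correlated equilibrium whenever
    `exp(-kε²/8)·n·m^b < 1`. -/
theorem small_support_nash_implies_small_support_ce (n m b k : ℕ) (ε : ℝ) (hε : 0 < ε)
    (hk : Real.exp (-(k : ℝ) * ε ^ 2 / 8) * n * (m : ℝ) ^ b < 1)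
    (hNash : ∀ u : Fin n → (Fin n → Fin m) → ℝ,
      (∀ i a, u i a ∈ Set.Icc (0 : ℝ) 1) →
      ∃ σ : Fin n → (Fin m → ℝ),
        (∀ i ai, 0 ≤ σ i ai) ∧ (∀ i, ∑ ai, σ i ai = 1) ∧
        (∀ i : Fin n, (Finset.univ.filter (fun ai => σ i ai ≠ 0)).card ≤ b) ∧
        (∀ i : Fin n, ∀ j : Fin m,
          ∑ a : Fin n → Fin m,
            (u i (Function.update a i j) - u i a) * ∏ l, σ l (a l) ≤ ε / 2)) :
    ∀ u : Fin n → (Fin n → Fin m) → ℝ,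
      (∀ i a, u i a ∈ Set.Icc (0 : ℝ) 1) →
      ∃ D : Fin k → (Fin n → Fin m),
        ∀ i : Fin n, ∀ f : Fin m → Fin m,
          (∑ l : Fin k, (u i (Function.update (D l) i (f (D l i))) - u i (D l))) / k
            ≤ ε := by
  intro u hu
  obtain ⟨σ, hσ0, hσ1, hσb, hσN⟩ := hNash u hu
  let supp (i : Fin n) : Finset (Fin m) := univ.filter fun j => σ i j ≠ 0
  let R := univ.sigma fun i => rulesSupportedOn (supp i)
  have hR : (#R : ℝ) ≤ n * m ^ b := by
    have hsupp : ∀ i, (supp i).Nonempty := fun i =>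
      filter_nonempty_iff.2 (exists_ne_zero_of_sum_ne_zero ((hσ1 i).symm ▸ one_ne_zero))
    exact_mod_cast card_sigma _ _ ▸ (sum_le_card_nsmul _ _ _ fun i _ =>
      card_rulesSupportedOn_le (hsupp i) (hσb i)).trans (by simp)
  have hunion : exp (-(k : ℝ) * ε ^ 2 / 8) * #R < 1 :=
    (mul_le_mul_of_nonneg_left hR (exp_pos _).le).trans_lt (by rwa [← mul_assoc])
  obtain ⟨D, hDsupp, hDgood⟩ := exists_forall_sum_le_of_integral_le (ι := Fin k)
    (Measure.pi fun i => (mixedStrategyPMF (σ i) (hσ0 i) (hσ1 i)).toMeasure)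
    (Measure.ae_pi_forall _ fun i => ae_mixedStrategyPMF_ne_zero (hσ0 i) (hσ1 i)) R
    (fun p a => u p.1 (update a p.1 (p.2 (a p.1))) - u p.1 a)
    (fun ⟨i, f⟩ _ a => ⟨by linarith [(hu i (update a i (f (a i)))).1, (hu i a).2],
      by linarith [(hu i (update a i (f (a i)))).2, (hu i a).1]⟩) hε.le
    (fun ⟨i, f⟩ _ => by
      rw [integral_pi_mixedStrategyPMF]
      exact sum_switch_sub_mul_prod_le (hσ0 i) (hσ1 i) (u i) (hσN i) f)
    (by rwa [Fintype.card_fin])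
  refine ⟨D, fun i f => div_le_of_le_mul₀ k.cast_nonneg hε.le ?_⟩
  obtain ⟨g, hg, hgf⟩ := exists_mem_rulesSupportedOn_eqOn (supp i) f
  have hgD : ∀ l, g (D l i) = f (D l i) := fun l =>
    hgf _ (mem_filter.2 ⟨mem_univ _, hDsupp l i⟩)
  have h := hDgood ⟨i, g⟩ (mem_sigma.2 ⟨mem_univ i, hg⟩)
  simp only [hgD, Fintype.card_fin] at h
  linarith
end

section
/- In the two-player zero-sum game where each player's action set is [m], player 1's payoff is u_1(a,b) = 1 if a = b and 0 otherwise, and u_2 = −u_1, every (exact) coarse correlated equilibrium has support of size at least m. -/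
open Finset

/-- In the two-player zero-sum matching game on `[m]` (player 1 gets 1
    on a match and 0 otherwise, player 2 the negative), every exact coarse correlated
    equilibrium has support of size at least `m`. -/
theorem matching_game_cce_support (m : ℕ)
    (u₁ : Fin m → Fin m → ℝ) (hu₁ : ∀ a b, u₁ a b = if a = b then 1 else 0)
    (u₂ : Fin m → Fin m → ℝ) (hu₂ : ∀ a b, u₂ a b = -u₁ a b)
    (x : Fin m × Fin m → ℝ)
    (hx0 : ∀ p, 0 ≤ x p) (hx1 : ∑ p, x p = 1)
    (hCCE1 : ∀ j : Fin m, ∑ p : Fin m × Fin m, (u₁ j p.2 - u₁ p.1 p.2) * x p ≤ 0)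
    (hCCE2 : ∀ j : Fin m, ∑ p : Fin m × Fin m, (u₂ p.1 j - u₂ p.1 p.2) * x p ≤ 0) :
    m ≤ (Finset.univ.filter (fun p : Fin m × Fin m => x p ≠ 0)).card := by
  rcases Nat.eq_zero_or_pos m with hm | hm
  · simp [hm]
  set V := ∑ p : Fin m × Fin m, u₁ p.1 p.2 * x p with hV
  -- each deviation of player 1 earns at most V
  have hle : ∀ j : Fin m, ∑ p : Fin m × Fin m, u₁ j p.2 * x p ≤ V := by
    intro j
    have h := hCCE1 j
    simp only [sub_mul, Finset.sum_sub_distrib] at h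
    linarith
  -- the sum over j of player 1's deviation payoffs is 1
  have hsum : ∑ j : Fin m, ∑ p : Fin m × Fin m, u₁ j p.2 * x p = 1 := by
    rw [Finset.sum_comm]
    have h : ∀ p : Fin m × Fin m, ∑ j : Fin m, u₁ j p.2 * x p = x p := by
      intro p
      rw [← Finset.sum_mul]
      have : ∑ j : Fin m, u₁ j p.2 = 1 := by
        simp [hu₁]
      rw [this, one_mul]
    simp_rw [h]
    exact hx1
  have h1 : (1:ℝ) ≤ m * V := by
    have h2 : (1:ℝ) ≤ ∑ _j : Fin m, V := by
      rw [← hsum]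
      exact Finset.sum_le_sum fun j _ => hle j
    simpa [Finset.sum_const, nsmul_eq_mul] using h2
  have hmR : (0:ℝ) < m := by exact_mod_cast hm
  have hVpos : 0 < V := by nlinarith
  -- player 2's deviations give row lower bounds
  have hrow : ∀ j : Fin m, V ≤ ∑ p : Fin m × Fin m, u₁ p.1 j * x p := by
    intro j
    have h := hCCE2 j
    simp only [hu₂, neg_sub_neg, sub_mul, Finset.sum_sub_distrib] at h
    linarith
  have hex : ∀ j : Fin m, ∃ p : Fin m × Fin m, p.1 = j ∧ x p ≠ 0 := by
    intro j
    have hpos : 0 < ∑ p : Fin m × Fin m, u₁ p.1 j * x p := lt_of_lt_of_le hVpos (hrow j)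
    obtain ⟨p, -, hp⟩ := Finset.exists_ne_zero_of_sum_ne_zero (ne_of_gt hpos)
    refine ⟨p, ?_, ?_⟩
    · by_contra h; simp [hu₁, h] at hp
    · intro h; simp [h] at hp
  classical
  have hcard : (Finset.univ : Finset (Fin m)).card ≤
      (Finset.univ.filter (fun p : Fin m × Fin m => x p ≠ 0)).card := by
    refine Finset.card_le_card_of_injOn (fun j => (hex j).choose) ?_ ?_
    · intro j _
      simp [(hex j).choose_spec.2]
    · intro j _ j' _ h
      have h1 := (hex j).choose_spec.1
      have h2 := (hex j').choose_spec.1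
      rw [← h1, ← h2]
      exact congrArg Prod.fst h
  simpa using hcard
end

section
/- In the two-player zero-sum 2×2 game with payoffs u_1(1,1) = v, u_1(2,2) = 1, u_1(1,2) = u_1(2,1) = 0, and u_2 = −u_1, where v > 0, the unique correlated equilibrium is the product distribution in which each player independently plays action 1 with probability 1/(v+1) and action 2 with probability v/(v+1). -/
/-! Only the four off-diagonal deviation constraints are not vacuous, and for this game they
chain into a cycle `x(0,1) ≤ v x(0,0) ≤ x(1,0) ≤ x(1,1) / v ≤ x(0,1)`. Hence all of them are
equalities, which fixes `x` up to scale, and the normalisation `∑ x = 1` fixes the scale. -/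

open Finset

theorem correlatedEquilibrium_constraints_iff {v : ℝ} {u₁ : Fin 2 → Fin 2 → ℝ}
    (hu₁ : ∀ a b, u₁ a b = if a = 0 ∧ b = 0 then v else if a = 1 ∧ b = 1 then 1 else 0)
    (x : Fin 2 × Fin 2 → ℝ) :
    ((∀ a j : Fin 2, ∑ b, (u₁ j b - u₁ a b) * x (a, b) ≤ 0) ∧
     (∀ b j : Fin 2, ∑ a, ((-u₁ a j) - (-u₁ a b)) * x (a, b) ≤ 0)) ↔
    (x (0, 1) ≤ v * x (0, 0) ∧ v * x (1, 0) ≤ x (1, 1)) ∧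
    (v * x (0, 0) ≤ x (1, 0) ∧ x (1, 1) ≤ v * x (0, 1)) := by
  simp only [Fin.forall_fin_two, Fin.sum_univ_two, hu₁]
  norm_num

theorem le_cycle_iff_eq {K : Type*} [Field K] [LinearOrder K] [IsStrictOrderedRing K]
    {v p q r s : K} (hv : 0 < v) :
    ((q ≤ v * p ∧ v * r ≤ s) ∧ (v * p ≤ r ∧ s ≤ v * q)) ↔
      (q = v * p ∧ r = v * p ∧ s = v * r) := by
  constructor
  · rintro ⟨⟨hqp, hrs⟩, hpr, hsq⟩
    have hvq : v * q ≤ v * (v * p) := mul_le_mul_of_nonneg_left hqp hv.le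
    have hvp : v * (v * p) ≤ v * r := mul_le_mul_of_nonneg_left hpr hv.le
    refine ⟨mul_left_cancel₀ hv.ne' ?_, mul_left_cancel₀ hv.ne' ?_, ?_⟩ <;> linarith
  · rintro ⟨hq, hr, hs⟩
    exact ⟨⟨hq.le, hs.ge⟩, hr.ge, by rw [hs, hr, hq]⟩

theorem eq_product_distribution_iff {v : ℝ} (hv : v + 1 ≠ 0) {x : Fin 2 × Fin 2 → ℝ}
    (hx : ∑ p, x p = 1) :
    (x (0, 1) = v * x (0, 0) ∧ x (1, 0) = v * x (0, 0) ∧ x (1, 1) = v * x (1, 0)) ↔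
    ∀ a b : Fin 2,
      x (a, b) = (if a = 0 then 1 / (v + 1) else v / (v + 1)) *
                 (if b = 0 then 1 / (v + 1) else v / (v + 1)) := by
  simp only [Fintype.sum_prod_type, Fin.sum_univ_two] at hx
  simp only [Fin.forall_fin_two, Fin.isValue, if_true, one_ne_zero, if_false]
  constructor
  · rintro ⟨hq, hr, hs⟩
    have hp : x (0, 0) * (v + 1) ^ 2 = 1 := by linear_combination hx - hq - (1 + v) * hr - hs
    refine ⟨⟨?_, ?_⟩, ?_, ?_⟩ <;> field_simp
    · linear_combination hp
    · linear_combination (v + 1) ^ 2 * hq + v * hp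
    · linear_combination (v + 1) ^ 2 * hr + v * hp
    · linear_combination (v + 1) ^ 2 * hs + v * (v + 1) ^ 2 * hr + v ^ 2 * hp
  · rintro ⟨⟨hp, hq⟩, hr, hs⟩
    rw [hp, hq, hr, hs]
    refine ⟨?_, ?_, ?_⟩ <;> ring

theorem unique_correlated_2x2_general (v : ℝ) (hv : 0 < v)
    (u₁ : Fin 2 → Fin 2 → ℝ)
    (hu₁ : ∀ a b, u₁ a b = if a = 0 ∧ b = 0 then v else if a = 1 ∧ b = 1 then 1 else 0)
    (x : Fin 2 × Fin 2 → ℝ)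
    (hx1 : ∑ p, x p = 1) :
    ((∀ a j : Fin 2, ∑ b, (u₁ j b - u₁ a b) * x (a, b) ≤ 0) ∧
     (∀ b j : Fin 2, ∑ a, ((-u₁ a j) - (-u₁ a b)) * x (a, b) ≤ 0))
    ↔
    (∀ a b : Fin 2,
      x (a, b) = (if a = 0 then 1 / (v + 1) else v / (v + 1)) *
                 (if b = 0 then 1 / (v + 1) else v / (v + 1))) := by
  rw [correlatedEquilibrium_constraints_iff hu₁, le_cycle_iff_eq hv,
    eq_product_distribution_iff (by positivity) hx1]

/-- In the 2×2 zero-sum game with `u₁(1,1) = v > 0`, `u₁(2,2) = 1` and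
    `u₁ = 0` off-diagonal (`u₂ = -u₁`), the unique correlated equilibrium is the
    product distribution where each player independently plays action 1 with
    probability `1/(v+1)` and action 2 with probability `v/(v+1)`.
    (Action 1 is encoded as `0 : Fin 2`, action 2 as `1 : Fin 2`.) -/
theorem unique_correlated_2x2 (v : ℝ) (hv : 0 < v)
    (u₁ : Fin 2 → Fin 2 → ℝ)
    (hu₁ : ∀ a b, u₁ a b = if a = 0 ∧ b = 0 then v else if a = 1 ∧ b = 1 then 1 else 0)
    (x : Fin 2 × Fin 2 → ℝ)
    (hx0 : ∀ p, 0 ≤ x p) (hx1 : ∑ p, x p = 1) :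
    ((∀ a j : Fin 2, ∑ b, (u₁ j b - u₁ a b) * x (a, b) ≤ 0) ∧
     (∀ b j : Fin 2, ∑ a, ((-u₁ a j) - (-u₁ a b)) * x (a, b) ≤ 0))
    ↔
    (∀ a b : Fin 2,
      x (a, b) = (if a = 0 then 1 / (v + 1) else v / (v + 1)) *
                 (if b = 0 then 1 / (v + 1) else v / (v + 1))) :=
  unique_correlated_2x2_general v hv u₁ hu₁ x hx1
end

section
/- Consider the 2n-player game consisting of n independent pairs of players (R_i, C_i), where pair i plays the 2×2 zero-sum game with payoffs u_{R_i}(1,1) = 2^i − 1, u_{R_i}(2,2) = 1, u_{R_i}(1,2) = u_{R_i}(2,1) = 0, u_{C_i} = −u_{R_i}, and payoffs of pair i do not depend on actions of other pairs. Then every (exact) correlated equilibrium of this game has support of size at least n. -/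
/-!
In a correlated equilibrium the joint play of each pair `(R_i, C_i)` must be the unique
correlated equilibrium of its own 2×2 game, so `R_i` is recommended action 1 with probability
`(v_i + 1)⁻¹ = 2^{-(i+1)}`. That probability is the weight of a set `E_i` of support points, and
since `2^{-(i+1)}` exceeds the sum of all later ones, `E_i` contains a support point lying in no
later `E_j`; these witnesses are pairwise distinct.
-/

open Finset

theorem sum_inv_two_pow_lt {s : Finset ℕ} {m : ℕ} (hs : ∀ k ∈ s, m < k) :
    ∑ k ∈ s, (2⁻¹ : ℝ) ^ k < 2⁻¹ ^ m := by
  obtain ⟨N, hN⟩ := s.exists_nat_subset_range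
  have hsub : s ⊆ Ico (m + 1) (max N (m + 1)) := fun k hk ↦
    mem_Ico.2 ⟨hs k hk, lt_max_of_lt_left (mem_range.1 (hN hk))⟩
  calc ∑ k ∈ s, (2⁻¹ : ℝ) ^ k
      < ∑ k ∈ Ico (m + 1) (max N (m + 1) + 1), (2⁻¹ : ℝ) ^ k :=
        sum_lt_sum_of_subset (hsub.trans (Ico_subset_Ico_right (Nat.le_succ _)))
          (i := max N (m + 1)) (by simp) (fun h ↦ by simpa using mem_range.1 (hN h))
          (by positivity) (fun _ _ _ ↦ by positivity)
    _ ≤ 2⁻¹ ^ (m + 1) / (1 - 2⁻¹) := geom_sum_Ico_le_of_lt_one (by norm_num) (by norm_num)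
    _ = 2⁻¹ ^ m := by ring

theorem Fin.sum_gt_inv_two_pow_succ_lt {n : ℕ} (i : Fin n) :
    ∑ j with i < j, (2⁻¹ : ℝ) ^ ((j : ℕ) + 1) < 2⁻¹ ^ ((i : ℕ) + 1) := by
  rw [← sum_image (g := fun j : Fin n ↦ (j : ℕ) + 1) (f := fun k ↦ (2⁻¹ : ℝ) ^ k)
    fun j _ k _ h ↦ Fin.ext (Nat.succ_injective h)]
  refine sum_inv_two_pow_lt fun k hk ↦ ?_
  obtain ⟨j, hj, rfl⟩ := mem_image.1 hk
  exact Nat.succ_lt_succ (mem_filter.1 hj).2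

theorem card_le_card_support_of_sum_gt_sum_later {ι α : Type*} [Fintype ι] [LinearOrder ι]
    [Fintype α] {x : α → ℝ} (hx : ∀ a, 0 ≤ x a) (E : ι → Finset α)
    (hE : ∀ i, ∑ j with i < j, ∑ a ∈ E j, x a < ∑ a ∈ E i, x a) :
    Fintype.card ι ≤ #{a | x a ≠ 0} := by
  classical
  have hwit : ∀ i, ∃ a ∈ E i, x a ≠ 0 ∧ ∀ j, i < j → a ∉ E j := by
    intro i
    by_contra! hcov
    refine (hE i).not_ge ?_
    calc ∑ a ∈ E i, x a
        ≤ ∑ a ∈ E i, ∑ j with i < j, if a ∈ E j then x a else 0 := by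
          refine sum_le_sum fun a ha ↦ ?_
          by_cases hxa : x a = 0
          · exact hxa.le.trans (sum_nonneg fun j _ ↦ ite_nonneg (hx a) le_rfl)
          · obtain ⟨j, hij, haj⟩ := hcov a ha hxa
            calc x a = if a ∈ E j then x a else 0 := by rw [if_pos haj]
              _ ≤ _ := single_le_sum (f := fun j ↦ if a ∈ E j then x a else 0)
                  (fun j _ ↦ ite_nonneg (hx a) le_rfl) (by simpa using hij)
      _ ≤ ∑ a, ∑ j with i < j, if a ∈ E j then x a else 0 :=
          sum_le_sum_of_subset_of_nonneg (subset_univ _)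
            fun a _ _ ↦ sum_nonneg fun j _ ↦ ite_nonneg (hx a) le_rfl
      _ = ∑ j with i < j, ∑ a ∈ E j, x a := by
          rw [sum_comm]
          exact sum_congr rfl fun j _ ↦ by rw [sum_ite_mem, univ_inter]
  choose e heE hex hlater using hwit
  have hinj : Set.InjOn e (univ : Finset ι) := by
    intro i _ j _ hij
    by_contra hne
    rcases lt_or_gt_of_ne hne with h | h
    · exact hlater i j h (hij ▸ heE j)
    · exact hlater j i h (hij ▸ heE i)
  exact card_le_card_of_injOn e (fun i _ ↦ by simpa using hex i) hinj

theorem sum_comp_mul_eq_sum_mul_sum_fiber {α β R : Type*} [Fintype α] [Fintype β]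
    [DecidableEq β] [NonUnitalNonAssocSemiring R] (π : α → β) (F : β → R) (x : α → R) :
    ∑ a, F (π a) * x a = ∑ b, F b * ∑ a with π a = b, x a := by
  rw [← sum_fiberwise univ π]
  refine sum_congr rfl fun b _ ↦ ?_
  rw [mul_sum]
  exact sum_congr rfl fun a ha ↦ by rw [(mem_filter.1 ha).2]

/-- The four incentive constraints chain into
`v q₀₁ ≤ v² q₀₀ ≤ v q₁₀ ≤ q₁₁ ≤ v q₀₁`, so all of them are equalities. -/
theorem add_eq_inv_of_incentive_constraints_two_by_two {v q₀₀ q₀₁ q₁₀ q₁₁ : ℝ} (hv : 0 < v)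
    (hR₀ : q₀₁ ≤ v * q₀₀) (hR₁ : v * q₁₀ ≤ q₁₁) (hC₀ : v * q₀₀ ≤ q₁₀) (hC₁ : q₁₁ ≤ v * q₀₁)
    (hsum : q₀₀ + q₀₁ + q₁₀ + q₁₁ = 1) :
    q₀₀ + q₀₁ = (v + 1)⁻¹ := by
  have h₀₁ : q₀₁ = v * q₀₀ := by nlinarith
  have h₁₀ : q₁₀ = v * q₀₀ := by nlinarith
  have h₁₁ : q₁₁ = v * q₁₀ := by nlinarith
  refine eq_inv_of_mul_eq_one_left ?_
  rw [h₁₁, h₁₀, h₀₁] at hsum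
  linear_combination hsum + (v + 1) * h₀₁

def NoProfitableDeviation {P A : Type*} [Fintype P] [DecidableEq P] [Fintype A] [DecidableEq A]
    (u : P → (P → A) → ℝ) (x : (P → A) → ℝ) : Prop :=
  ∀ (p : P) (ap j : A),
    ∑ a : P → A, (if a p = ap then (u p (Function.update a p j) - u p a) * x a else 0) ≤ 0

namespace PairsGame

variable {n : ℕ}

def pairProfile (i : Fin n) (a : Fin n × Bool → Fin 2) : Fin 2 × Fin 2 :=
  (a (i, false), a (i, true))

def rowPayoff (v : ℝ) (c : Fin 2 × Fin 2) : ℝ :=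
  if c.1 = 0 ∧ c.2 = 0 then v else if c.1 = 1 ∧ c.2 = 1 then 1 else 0

def payoff (v : Fin n → ℝ) (p : Fin n × Bool) (a : Fin n × Bool → Fin 2) : ℝ :=
  (if p.2 then -1 else 1) * rowPayoff (v p.1) (pairProfile p.1 a)

def pairDist (x : (Fin n × Bool → Fin 2) → ℝ) (i : Fin n) (c : Fin 2 × Fin 2) : ℝ :=
  ∑ a with pairProfile i a = c, x a

variable {v : Fin n → ℝ} {x : (Fin n × Bool → Fin 2) → ℝ}

theorem sum_row_deviation_le
    (hCE : NoProfitableDeviation (payoff v) x) (i : Fin n) (ap j : Fin 2) :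
    ∑ c : Fin 2 × Fin 2,
      (if c.1 = ap then rowPayoff (v i) (j, c.2) - rowPayoff (v i) c else 0) * pairDist x i c
      ≤ 0 := by
  simp only [pairDist]
  rw [← sum_comp_mul_eq_sum_mul_sum_fiber]
  refine (sum_congr rfl fun a _ ↦ ?_).trans_le (hCE (i, false) ap j)
  by_cases h : a (i, false) = ap <;> simp [h, payoff, pairProfile]

theorem sum_col_deviation_le
    (hCE : NoProfitableDeviation (payoff v) x) (i : Fin n) (ap j : Fin 2) :
    ∑ c : Fin 2 × Fin 2,
      (if c.2 = ap then rowPayoff (v i) c - rowPayoff (v i) (c.1, j) else 0) * pairDist x i c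
      ≤ 0 := by
  simp only [pairDist]
  rw [← sum_comp_mul_eq_sum_mul_sum_fiber]
  refine (sum_congr rfl fun a _ ↦ ?_).trans_le (hCE (i, true) ap j)
  by_cases h : a (i, true) = ap <;> simp [h, payoff, pairProfile, neg_add_eq_sub]

theorem sum_pairDist (i : Fin n) : ∑ c, pairDist x i c = ∑ a, x a :=
  sum_fiberwise univ (pairProfile i) x

theorem sum_rowAction_eq_zero_eq_pairDist_add (i : Fin n) :
    ∑ a with a (i, false) = 0, x a = pairDist x i (0, 0) + pairDist x i (0, 1) := by
  have h := sum_comp_mul_eq_sum_mul_sum_fiber (pairProfile i)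
    (fun c ↦ if c.1 = 0 then 1 else 0) x
  simp only [ite_mul, one_mul, zero_mul] at h
  rw [sum_filter]
  refine h.trans ?_
  simp [pairDist, Fintype.sum_prod_type, Fin.sum_univ_two, pairProfile]

theorem sum_rowAction_eq_zero_eq_inv (hx1 : ∑ a, x a = 1)
    (hCE : NoProfitableDeviation (payoff v) x) (i : Fin n) (hv : 0 < v i) :
    ∑ a with a (i, false) = 0, x a = (v i + 1)⁻¹ := by
  have hR₀ := sum_row_deviation_le hCE i 0 1
  have hR₁ := sum_row_deviation_le hCE i 1 0
  have hC₀ := sum_col_deviation_le hCE i 0 1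
  have hC₁ := sum_col_deviation_le hCE i 1 0
  have hsum : ∑ c, pairDist x i c = 1 := (sum_pairDist i).trans hx1
  simp only [Fintype.sum_prod_type, Fin.sum_univ_two, rowPayoff] at hR₀ hR₁ hC₀ hC₁ hsum
  norm_num at hR₀ hR₁ hC₀ hC₁
  rw [sum_rowAction_eq_zero_eq_pairDist_add]
  exact add_eq_inv_of_incentive_constraints_two_by_two hv hR₀ hR₁ hC₀ hC₁ (by linarith)

end PairsGame

/-- In the 2n-player game made of n independent pairs `(R_i, C_i)`
    (player `(i, false)` is `R_i`, player `(i, true)` is `C_i`), where pair `i` plays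
    the 2×2 zero-sum game with `u_{R_i}(1,1) = 2^{i} - 1` (for `i = 1, …, n`),
    `u_{R_i}(2,2) = 1`, off-diagonal 0, and `u_{C_i} = -u_{R_i}`, every exact
    correlated equilibrium has support of size at least `n`.
    (Action 1 is encoded as `0 : Fin 2`, action 2 as `1 : Fin 2`; the pair index
    `i : Fin n` corresponds to `i+1` in the paper, so `v_i = 2^{i+1} - 1`.) -/
theorem pairs_game_ce_support (n : ℕ)
    (u : Fin n × Bool → ((Fin n × Bool) → Fin 2) → ℝ)
    (hu : ∀ (i : Fin n) (role : Bool) (a : (Fin n × Bool) → Fin 2),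
      u (i, role) a =
        (if role then -1 else 1) *
          (if a (i, false) = 0 ∧ a (i, true) = 0 then (2 : ℝ) ^ ((i : ℕ) + 1) - 1
           else if a (i, false) = 1 ∧ a (i, true) = 1 then 1 else 0))
    (x : ((Fin n × Bool) → Fin 2) → ℝ)
    (hx0 : ∀ a, 0 ≤ x a) (hx1 : ∑ a, x a = 1)
    (hCE : ∀ (p : Fin n × Bool) (ap j : Fin 2),
      ∑ a : (Fin n × Bool) → Fin 2,
        (if a p = ap then (u p (Function.update a p j) - u p a) * x a else 0) ≤ 0) :
    n ≤ (Finset.univ.filter (fun a : (Fin n × Bool) → Fin 2 => x a ≠ 0)).card := by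
  have hv : ∀ i : Fin n, 0 < (2 : ℝ) ^ ((i : ℕ) + 1) - 1 := fun i ↦
    sub_pos.2 (one_lt_pow₀ one_lt_two (Nat.succ_ne_zero _))
  have hgame : u = PairsGame.payoff fun i ↦ (2 : ℝ) ^ ((i : ℕ) + 1) - 1 :=
    funext fun p ↦ funext fun a ↦ hu p.1 p.2 a
  subst hgame
  have hmarginal : ∀ i : Fin n, ∑ a with a (i, false) = 0, x a = (2⁻¹ : ℝ) ^ ((i : ℕ) + 1) :=
    fun i ↦ by rw [PairsGame.sum_rowAction_eq_zero_eq_inv hx1 hCE i (hv i), sub_add_cancel, inv_pow]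
  simpa using card_le_card_support_of_sum_gt_sum_later hx0 (fun i ↦ {a | a (i, false) = 0})
    fun i ↦ by simpa only [hmarginal] using Fin.sum_gt_inv_two_pow_succ_lt i
end

section
/- Every n-player m-action game with payoffs in [0,1] admits an exact coarse correlated equilibrium whose support has size at most nm + 1. -/
/-!
A coarse correlated equilibrium is a mixture of action profiles whose expected regret vector,
indexed by the `nm` pairs (player, deviation), is coordinatewise nonpositive.

If no such mixture existed, Hahn–Banach would separate the compact convex set of mixed regret
vectors from the nonpositive orthant, yielding nonnegative weights `l` on the deviations with
positive `l`-weighted regret at every profile. But under the product distribution whose `i`-th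
factor is proportional to `l (i, ·)`, the expected `l`-weighted regret vanishes: deviating to an
action drawn from one's own marginal does not change the distribution of play.

Carathéodory's theorem in `ℝ^(nm)` then rewrites the equilibrium's expected regret vector as a
convex combination of at most `nm + 1` regret vectors of pure profiles.
-/

open Finset Function

theorem exists_mem_stdSimplex_sum_smul_eq_card_support_le {α E : Type*} [Fintype α]
    [AddCommGroup E] [Module ℝ E] [FiniteDimensional ℝ E] (v : α → E) {x : α → ℝ}
    (hx : x ∈ stdSimplex ℝ α) :
    ∃ x' ∈ stdSimplex ℝ α, ∑ a, x' a • v a = ∑ a, x a • v a ∧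
      #{a | x' a ≠ 0} ≤ Module.finrank ℝ E + 1 := by
  classical
  have hmem : ∑ a, x a • v a ∈ convexHull ℝ (Set.range v) :=
    mem_convexHull_of_exists_fintype x v hx.1 hx.2 Set.mem_range_self rfl
  obtain ⟨ι, _, z, w, hz, hz_indep, hw_pos, hw_sum, hwz⟩ :=
    eq_pos_convex_span_of_mem_convexHull hmem
  choose rep hrep using fun i => hz (Set.mem_range_self i)
  refine ⟨fun a => ∑ i with rep i = a, w i, ⟨fun a => sum_nonneg fun i _ => (hw_pos i).le, ?_⟩,
    ?_, ?_⟩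
  · exact (sum_fiberwise univ rep w).trans hw_sum
  · rw [← hwz, ← sum_fiberwise univ rep]
    refine sum_congr rfl fun a _ => ?_
    rw [sum_smul]
    refine sum_congr rfl fun i hi => ?_
    rw [← hrep i, (mem_filter.1 hi).2]
  · have hsupp : ({a | ∑ i with rep i = a, w i ≠ 0} : Finset α) ⊆ univ.image rep := by
      intro a ha
      by_contra hnot
      refine (mem_filter.1 ha).2 (sum_eq_zero fun i hi => absurd ?_ hnot)
      exact mem_image.2 ⟨i, mem_univ i, (mem_filter.1 hi).2⟩
    calc #{a | ∑ i with rep i = a, w i ≠ 0} ≤ #(univ.image rep) := card_le_card hsupp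
      _ ≤ Fintype.card ι := card_image_le
      _ ≤ Module.finrank ℝ (vectorSpan ℝ (Set.range z)) + 1 := hz_indep.card_le_finrank_succ
      _ ≤ Module.finrank ℝ E + 1 := by gcongr; exact Submodule.finrank_le _

theorem nonneg_apply_of_forall_nonpos_lt {ι : Type*} (f : (ι → ℝ) →ₗ[ℝ] ℝ) {c : ℝ}
    (hf : ∀ y ≤ 0, c < f y) {y : ι → ℝ} (hy : y ≤ 0) : 0 ≤ f y := by
  have hc : c < 0 := by simpa using hf 0 le_rfl
  by_contra! hfy
  have := hf ((c / f y) • y)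
    (smul_nonpos_of_nonneg_of_nonpos (div_nonneg_of_nonpos hc.le hfy.le) hy)
  rw [map_smul, smul_eq_mul, div_mul_cancel₀ c hfy.ne] at this
  exact this.false

theorem exists_mem_stdSimplex_sum_smul_nonpos {α ι : Type*} [Fintype α] [Fintype ι]
    (v : α → ι → ℝ)
    (h : ∀ l : ι → ℝ, 0 ≤ l → ∃ x ∈ stdSimplex ℝ α, ∑ a, x a * ∑ p, l p * v a p ≤ 0) :
    ∃ x ∈ stdSimplex ℝ α, ∑ a, x a • v a ≤ 0 := by
  classical
  set L := Fintype.linearCombination ℝ v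
  -- The separating functional turns out to be `y ↦ -∑ p, l p * y p` with `l ≥ 0`, since it is
  -- bounded below on the orthant.
  by_contra! hK
  have hdisj : Disjoint (L '' stdSimplex ℝ α) (Set.Iic 0) := by
    rw [Set.disjoint_left]
    rintro _ ⟨x, hx, rfl⟩ hLx
    exact hK x hx (by simpa [L, Fintype.linearCombination_apply] using hLx)
  obtain ⟨f, c₁, c₂, hfK, hc, hfC⟩ := geometric_hahn_banach_compact_closed
    ((convex_stdSimplex ℝ α).linear_image L)
    ((isCompact_stdSimplex ℝ α).image L.continuous_of_finiteDimensional)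
    (convex_Iic 0) isClosed_Iic hdisj
  set e : ι → ι → ℝ := fun p q => if p = q then 1 else 0
  set l : ι → ℝ := fun p => f (-e p)
  have hl : 0 ≤ l := fun p =>
    nonneg_apply_of_forall_nonpos_lt f.toLinearMap hfC (neg_nonpos.2 fun q => by
      simp only [e, Pi.zero_apply]; split_ifs <;> norm_num)
  obtain ⟨x, hx, hxl⟩ := h l hl
  have hfLx : f (L x) = -∑ a, x a * ∑ p, l p * v a p := by
    rw [← ContinuousLinearMap.coe_coe, LinearMap.pi_apply_eq_sum_univ]
    simp only [L, Fintype.linearCombination_apply, l, map_neg, ContinuousLinearMap.coe_coe,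
      Finset.sum_apply, Pi.smul_apply, smul_eq_mul, mul_sum, sum_mul, ← sum_neg_distrib]
    rw [sum_comm]
    exact sum_congr rfl fun _ _ => sum_congr rfl fun _ _ => by ring
  have hf0 : c₂ < 0 := by simpa using hfC 0 (Set.mem_Iic.2 le_rfl)
  have := hfK (L x) ⟨x, hx, rfl⟩
  linarith

theorem exists_mem_stdSimplex_eq_sum_smul {β : Type*} [Fintype β] [Nonempty β] {w : β → ℝ}
    (hw : 0 ≤ w) : ∃ μ ∈ stdSimplex ℝ β, w = (∑ b, w b) • μ := by
  classical
  obtain hS | hS := (sum_nonneg fun b _ => hw b : 0 ≤ ∑ b, w b).eq_or_lt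
  · have hw0 : w = 0 := funext fun b => (sum_eq_zero_iff_of_nonneg fun b _ => hw b).1 hS.symm b
      (mem_univ b)
    exact ⟨_, single_mem_stdSimplex ℝ (Classical.arbitrary β), by simp [hw0]⟩
  · refine ⟨(∑ b, w b)⁻¹ • w, ⟨fun b => ?_, ?_⟩, ?_⟩
    · exact mul_nonneg (inv_nonneg.2 hS.le) (hw b)
    · simp [← mul_sum, inv_mul_cancel₀ hS.ne']
    · rw [smul_smul, mul_inv_cancel₀ hS.ne', one_smul]

section Game

variable {ι : Type*} {A : ι → Type*}

def regret [DecidableEq ι] (u : ι → (∀ i, A i) → ℝ) (a : ∀ i, A i) (p : Σ i, A i) : ℝ :=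
  u p.1 (update a p.1 p.2) - u p.1 a

def prodDist [Fintype ι] (μ : ∀ i, A i → ℝ) (a : ∀ i, A i) : ℝ := ∏ i, μ i (a i)

variable [Fintype ι] [DecidableEq ι]

theorem prodDist_mem_stdSimplex [∀ i, Fintype (A i)] {μ : ∀ i, A i → ℝ}
    (hμ : ∀ i, μ i ∈ stdSimplex ℝ (A i)) :
    prodDist μ ∈ stdSimplex ℝ (∀ i, A i) :=
  ⟨fun a => prod_nonneg fun i _ => (hμ i).1 (a i),
    by simp only [prodDist, ← Fintype.prod_sum, (hμ _).2, prod_const_one]⟩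

theorem mul_prodDist_update (μ : ∀ i, A i → ℝ) (a : ∀ i, A i) (i : ι) (j : A i) :
    μ i (a i) * prodDist μ (update a i j) = μ i j * prodDist μ a := by
  simp only [prodDist, ← mul_prod_erase univ _ (mem_univ i), update_self]
  rw [prod_congr rfl fun k hk => by rw [update_of_ne (ne_of_mem_erase hk)]]
  ring

/-- The substitution `(j, a) ↦ (a i, update a i j)` is an involution preserving the weight
`μ i j * prodDist μ a`. -/
theorem sum_mul_sum_prodDist_mul_update [∀ i, Fintype (A i)] {μ : ∀ i, A i → ℝ} {i : ι}
    (hμ : ∑ j, μ i j = 1) (g : (∀ i, A i) → ℝ) :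
    ∑ j, μ i j * ∑ a, prodDist μ a * g (update a i j) = ∑ a, prodDist μ a * g a := by
  have hinv : Involutive fun p : A i × (∀ i, A i) => (p.2 i, update p.2 i p.1) := by
    rintro ⟨j, a⟩
    simp
  calc ∑ j, μ i j * ∑ a, prodDist μ a * g (update a i j)
      = ∑ p : A i × (∀ i, A i), μ i p.1 * prodDist μ p.2 * g (update p.2 i p.1) := by
        simp only [Fintype.sum_prod_type, mul_sum, mul_assoc]
    _ = ∑ p : A i × (∀ i, A i), μ i p.1 * prodDist μ p.2 * g p.2 := by
        refine Fintype.sum_equiv hinv.toPerm _ _ fun ⟨j, a⟩ => ?_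
        simp [mul_prodDist_update]
    _ = ∑ a, prodDist μ a * g a := by
        simp only [Fintype.sum_prod_type, mul_assoc, ← mul_sum, ← sum_mul, hμ, one_mul]

theorem sum_mul_sum_prodDist_mul_regret [∀ i, Fintype (A i)] (u : ι → (∀ i, A i) → ℝ)
    {μ : ∀ i, A i → ℝ} (i : ι) (hμ : ∑ j, μ i j = 1) :
    ∑ j, μ i j * ∑ a, prodDist μ a * regret u a ⟨i, j⟩ = 0 := by
  simp only [regret, mul_sub, sum_sub_distrib, sum_mul_sum_prodDist_mul_update hμ,
    ← sum_mul, hμ, one_mul, sub_self]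

theorem exists_mem_stdSimplex_sum_smul_regret_nonpos [∀ i, Fintype (A i)] [∀ i, Nonempty (A i)]
    (u : ι → (∀ i, A i) → ℝ) :
    ∃ x ∈ stdSimplex ℝ (∀ i, A i), ∑ a, x a • regret u a ≤ 0 := by
  refine exists_mem_stdSimplex_sum_smul_nonpos _ fun l hl => ?_
  choose μ hμ hlμ using fun i => exists_mem_stdSimplex_eq_sum_smul (w := fun j => l ⟨i, j⟩)
    fun j => hl ⟨i, j⟩
  have hl_eq : ∀ i j, l ⟨i, j⟩ = (∑ j, l ⟨i, j⟩) * μ i j := fun i j => congrFun (hlμ i) j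
  refine ⟨prodDist μ, prodDist_mem_stdSimplex hμ, le_of_eq ?_⟩
  calc ∑ a, prodDist μ a * ∑ p, l p * regret u a p
      = ∑ p, l p * ∑ a, prodDist μ a * regret u a p := by
        simp only [mul_sum, mul_left_comm _ (l _)]
        exact sum_comm
    _ = ∑ i, ∑ j, (∑ j, l ⟨i, j⟩) * μ i j * ∑ a, prodDist μ a * regret u a ⟨i, j⟩ := by
        rw [Fintype.sum_sigma]
        exact sum_congr rfl fun i _ => sum_congr rfl fun j _ => by rw [← hl_eq]
    _ = ∑ i, (∑ j, l ⟨i, j⟩) * ∑ j, μ i j * ∑ a, prodDist μ a * regret u a ⟨i, j⟩ := by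
        simp only [mul_sum, mul_assoc]
    _ = 0 := sum_eq_zero fun i _ => by rw [sum_mul_sum_prodDist_mul_regret u i (hμ i).2, mul_zero]

end Game

theorem exists_cce_small_support_general (n m : ℕ) (hm : 0 < m)
    (u : Fin n → (Fin n → Fin m) → ℝ) :
    ∃ x : (Fin n → Fin m) → ℝ,
      (∀ a, 0 ≤ x a) ∧ (∑ a, x a = 1) ∧
      (∀ i : Fin n, ∀ j : Fin m,
        ∑ a, (u i (Function.update a i j) - u i a) * x a ≤ 0) ∧
      (Finset.univ.filter (fun a : Fin n → Fin m => x a ≠ 0)).card ≤ n * m + 1 := by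
  have : Nonempty (Fin m) := ⟨⟨0, hm⟩⟩
  obtain ⟨x₀, hx₀, hregret₀⟩ :=
    exists_mem_stdSimplex_sum_smul_regret_nonpos (A := fun _ => Fin m) u
  obtain ⟨x, ⟨hx_nonneg, hx_sum⟩, hregret, hcard⟩ :=
    exists_mem_stdSimplex_sum_smul_eq_card_support_le (regret u) hx₀
  refine ⟨x, hx_nonneg, hx_sum, fun i j => ?_, hcard.trans_eq ?_⟩
  · have := (hregret ▸ hregret₀) ⟨i, j⟩
    simpa [regret, mul_comm] using this
  · simp [Module.finrank_fintype_fun_eq_card]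

/-- Every n-player m-action game with payoffs in [0,1] admits an exact
    coarse correlated equilibrium with support of size at most `nm + 1`. -/
theorem exists_cce_small_support (n m : ℕ) (hm : 0 < m)
    (u : Fin n → (Fin n → Fin m) → ℝ)
    (hu : ∀ i a, u i a ∈ Set.Icc (0 : ℝ) 1) :
    ∃ x : (Fin n → Fin m) → ℝ,
      (∀ a, 0 ≤ x a) ∧ (∑ a, x a = 1) ∧
      (∀ i : Fin n, ∀ j : Fin m,
        ∑ a, (u i (Function.update a i j) - u i a) * x a ≤ 0) ∧
      (Finset.univ.filter (fun a : Fin n → Fin m => x a ≠ 0)).card ≤ n * m + 1 :=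
  exists_cce_small_support_general n m hm u
end

section
/- Consider the two-player zero-sum game built from an X3C instance with universe J of size n and collection {S_1, ..., S_m} of 3-element subsets covering J, where u_1(i,j) = 1 if j ∈ S_i and −1 otherwise, and u_2 = −u_1. If the X3C instance admits an exact cover (a subcollection of n/3 pairwise disjoint sets covering J), then the game has a Nash equilibrium in which player 1 plays uniformly over the exact cover and player 2 plays uniformly over J; moreover, the minimum possible support size of player 1's strategy over all Nash equilibria is exactly n/3. -/
open Finset

/-- In the X3C covering game, if the instance admits an exact cover
    `I'` (so `|I'| = nJ/3`), then (uniform over `I'`, uniform over `J`) is a Nash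
    equilibrium, its player-1 support has size `nJ/3`, and every Nash equilibrium
    gives player 1 a support of size at least `nJ/3`. -/
theorem x3c_exact_cover_min_support (nJ m : ℕ) (hnJ : 0 < nJ)
    (S : Fin m → Finset (Fin nJ))
    (hS3 : ∀ i, (S i).card = 3)
    (hcover : ∀ j : Fin nJ, ∃ i, j ∈ S i)
    (u₁ : Fin m → Fin nJ → ℝ)
    (hu₁ : ∀ i j, u₁ i j = if j ∈ S i then 1 else -1)
    (I' : Finset (Fin m))
    (hexact : ∀ j : Fin nJ, ∃! i : Fin m, i ∈ I' ∧ j ∈ S i)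
    (hI'card : 3 * I'.card = nJ) :
    -- the uniform-over-cover / uniform-over-universe profile is a Nash equilibrium
    ((∀ i' : Fin m,
        ∑ j, u₁ i' j * ((nJ : ℝ)⁻¹) ≤
        ∑ i, ∑ j, u₁ i j * (if i ∈ I' then ((I'.card : ℝ))⁻¹ else 0) * ((nJ : ℝ)⁻¹)) ∧
     (∀ j' : Fin nJ,
        ∑ i, (-u₁ i j') * (if i ∈ I' then ((I'.card : ℝ))⁻¹ else 0) ≤
        ∑ i, ∑ j, (-u₁ i j) * (if i ∈ I' then ((I'.card : ℝ))⁻¹ else 0) * ((nJ : ℝ)⁻¹)))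
    ∧
    -- its player-1 support has size exactly nJ / 3
    (Finset.univ.filter
        (fun i : Fin m => (if i ∈ I' then ((I'.card : ℝ))⁻¹ else 0) ≠ 0)).card = nJ / 3
    ∧
    -- every Nash equilibrium has player-1 support of size at least nJ / 3
    (∀ (σ₁ : Fin m → ℝ) (σ₂ : Fin nJ → ℝ),
      (∀ i, 0 ≤ σ₁ i) → (∑ i, σ₁ i = 1) →
      (∀ j, 0 ≤ σ₂ j) → (∑ j, σ₂ j = 1) →
      (∀ i' : Fin m, ∑ j, u₁ i' j * σ₂ j ≤ ∑ i, ∑ j, u₁ i j * σ₁ i * σ₂ j) →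
      (∀ j' : Fin nJ, ∑ i, (-u₁ i j') * σ₁ i ≤ ∑ i, ∑ j, (-u₁ i j) * σ₁ i * σ₂ j) →
      nJ / 3 ≤ (Finset.univ.filter (fun i : Fin m => σ₁ i ≠ 0)).card) := by
  have hk : 0 < I'.card := by omega
  have hkR : ((I'.card : ℝ)) ≠ 0 := Nat.cast_ne_zero.mpr hk.ne'
  have hnR : ((nJ : ℝ)) ≠ 0 := Nat.cast_ne_zero.mpr hnJ.ne'
  have hu' : ∀ i j, u₁ i j = 2 * (if j ∈ S i then (1:ℝ) else 0) - 1 := by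
    intro i j; rw [hu₁]; split <;> norm_num
  -- row sums
  have L1 : ∀ i, ∑ j, u₁ i j = 6 - (nJ : ℝ) := by
    intro i
    calc ∑ j, u₁ i j = ∑ j, (2 * (if j ∈ S i then (1:ℝ) else 0) - 1) := by
          simp only [hu']
      _ = 2 * (∑ j, (if j ∈ S i then (1:ℝ) else 0)) - nJ := by
          rw [Finset.sum_sub_distrib, Finset.sum_const, ← Finset.mul_sum]
          simp
      _ = 6 - (nJ : ℝ) := by
          rw [Finset.sum_ite_mem, Finset.univ_inter, Finset.sum_const, hS3]
          norm_num
  -- column sums over the exact cover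
  have L2 : ∀ j, ∑ i ∈ I', u₁ i j = 2 - (I'.card : ℝ) := by
    intro j
    obtain ⟨i₀, ⟨hi₀I, hi₀S⟩, huniq⟩ := hexact j
    have hfilt : I'.filter (fun i => j ∈ S i) = {i₀} := by
      ext i
      simp only [Finset.mem_filter, Finset.mem_singleton]
      constructor
      · rintro ⟨h1, h2⟩; exact huniq i ⟨h1, h2⟩
      · rintro rfl; exact ⟨hi₀I, hi₀S⟩
    calc ∑ i ∈ I', u₁ i j = ∑ i ∈ I', (2 * (if j ∈ S i then (1:ℝ) else 0) - 1) := by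
          simp only [hu']
      _ = 2 * (∑ i ∈ I', (if j ∈ S i then (1:ℝ) else 0)) - I'.card := by
          rw [Finset.sum_sub_distrib, Finset.sum_const, ← Finset.mul_sum]
          simp
      _ = 2 - (I'.card : ℝ) := by
          rw [← Finset.sum_filter, hfilt, Finset.sum_singleton]; ring
  have hσsum : ∑ i, (if i ∈ I' then ((I'.card : ℝ))⁻¹ else 0) = 1 := by
    rw [Finset.sum_ite_mem, Finset.univ_inter, Finset.sum_const, nsmul_eq_mul,
      mul_inv_cancel₀ hkR]
  -- value of each column against the uniform-over-cover strategy
  have P2 : ∀ j, ∑ i, (-u₁ i j) * (if i ∈ I' then ((I'.card : ℝ))⁻¹ else 0)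
      = ((I'.card : ℝ) - 2) * (I'.card : ℝ)⁻¹ := by
    intro j
    have : ∀ i, (-u₁ i j) * (if i ∈ I' then ((I'.card : ℝ))⁻¹ else 0)
        = (if i ∈ I' then (-u₁ i j) * (I'.card : ℝ)⁻¹ else 0) := by
      intro i; split <;> simp
    rw [Finset.sum_congr rfl (fun i _ => this i), Finset.sum_ite_mem, Finset.univ_inter]
    have : ∑ i ∈ I', (-u₁ i j) * (I'.card : ℝ)⁻¹ = (-(∑ i ∈ I', u₁ i j)) * (I'.card : ℝ)⁻¹ := by
      rw [← Finset.sum_mul, Finset.sum_neg_distrib]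
    rw [this, L2 j]; ring
  refine ⟨⟨?_, ?_⟩, ?_, ?_⟩
  · -- player 1 equilibrium condition (equality)
    intro i'
    have hRHS : ∑ i, ∑ j, u₁ i j * (if i ∈ I' then ((I'.card : ℝ))⁻¹ else 0) * ((nJ : ℝ)⁻¹)
        = (6 - (nJ : ℝ)) * (nJ : ℝ)⁻¹ := by
      have h1 : ∀ i, ∑ j, u₁ i j * (if i ∈ I' then ((I'.card : ℝ))⁻¹ else 0) * ((nJ : ℝ)⁻¹)
          = ((6 - (nJ : ℝ)) * (nJ : ℝ)⁻¹) * (if i ∈ I' then ((I'.card : ℝ))⁻¹ else 0) := by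
        intro i
        rw [← Finset.sum_mul, ← Finset.sum_mul, L1]; ring
      rw [Finset.sum_congr rfl (fun i _ => h1 i), ← Finset.mul_sum, hσsum, mul_one]
    rw [← Finset.sum_mul, L1, hRHS]
  · -- player 2 equilibrium condition (equality)
    intro j'
    have hRHS : ∑ i, ∑ j, (-u₁ i j) * (if i ∈ I' then ((I'.card : ℝ))⁻¹ else 0) * ((nJ : ℝ)⁻¹)
        = ((I'.card : ℝ) - 2) * (I'.card : ℝ)⁻¹ := by
      rw [Finset.sum_comm]
      have h1 : ∀ j, ∑ i, (-u₁ i j) * (if i ∈ I' then ((I'.card : ℝ))⁻¹ else 0) * ((nJ : ℝ)⁻¹)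
          = (((I'.card : ℝ) - 2) * (I'.card : ℝ)⁻¹) * (nJ : ℝ)⁻¹ := by
        intro j
        rw [← Finset.sum_mul, P2 j]
      rw [Finset.sum_congr rfl (fun j _ => h1 j), Finset.sum_const, Finset.card_univ,
        Fintype.card_fin, nsmul_eq_mul]
      field_simp
    rw [P2 j', hRHS]
  · -- support size of the exhibited equilibrium
    have hfilt : Finset.univ.filter
        (fun i : Fin m => (if i ∈ I' then ((I'.card : ℝ))⁻¹ else 0) ≠ 0) = I' := by
      ext i
      simp only [Finset.mem_filter, Finset.mem_univ, true_and]
      by_cases hi : i ∈ I'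
      · simp [hi, inv_ne_zero hkR]
      · simp [hi]
    rw [hfilt]; omega
  · -- minimality of the support size
    intro σ₁ σ₂ h1pos h1sum h2pos h2sum hNE1 hNE2
    set v := ∑ i, ∑ j, u₁ i j * σ₁ i * σ₂ j with hv
    -- the value is > -1
    obtain ⟨j₀, hj₀⟩ : ∃ j, 0 < σ₂ j := by
      by_contra h; push_neg at h
      have : ∑ j, σ₂ j ≤ 0 := Finset.sum_nonpos (fun j _ => h j)
      linarith
    obtain ⟨i₀, hi₀⟩ := hcover j₀
    have hlow : -1 < ∑ j, u₁ i₀ j * σ₂ j := by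
      have hpos : 0 < ∑ j, (u₁ i₀ j + 1) * σ₂ j := by
        have hterm : ∀ j, 0 ≤ (u₁ i₀ j + 1) * σ₂ j := by
          intro j
          have h0 : 0 ≤ u₁ i₀ j + 1 := by rw [hu₁]; split <;> norm_num
          exact mul_nonneg h0 (h2pos j)
        have hj₀term : 0 < (u₁ i₀ j₀ + 1) * σ₂ j₀ := by
          have h0 : u₁ i₀ j₀ = 1 := by rw [hu₁, if_pos hi₀]
          rw [h0]; linarith
        exact Finset.sum_pos' (fun j _ => hterm j) ⟨j₀, Finset.mem_univ j₀, hj₀term⟩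
      have heq : ∑ j, (u₁ i₀ j + 1) * σ₂ j = (∑ j, u₁ i₀ j * σ₂ j) + 1 := by
        have : ∀ j, (u₁ i₀ j + 1) * σ₂ j = u₁ i₀ j * σ₂ j + σ₂ j := by intro j; ring
        rw [Finset.sum_congr rfl (fun j _ => this j), Finset.sum_add_distrib, h2sum]
      linarith
    have hvlow : -1 < v := lt_of_lt_of_le hlow (hNE1 i₀)
    -- the support of σ₁ covers the universe
    have hsupcov : ∀ j : Fin nJ, ∃ i, σ₁ i ≠ 0 ∧ j ∈ S i := by
      intro j
      by_contra h; push_neg at h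
      have hone : ∑ i, (-u₁ i j) * σ₁ i = 1 := by
        have : ∀ i, (-u₁ i j) * σ₁ i = σ₁ i := by
          intro i
          by_cases hi : σ₁ i = 0
          · simp [hi]
          · rw [hu₁, if_neg (h i hi)]; ring
        rw [Finset.sum_congr rfl (fun i _ => this i), h1sum]
      have hneg : ∑ i, ∑ j, (-u₁ i j) * σ₁ i * σ₂ j = -v := by
        rw [hv, ← Finset.sum_neg_distrib]
        apply Finset.sum_congr rfl
        intro i _
        rw [← Finset.sum_neg_distrib]
        apply Finset.sum_congr rfl
        intro j _; ring
      have := hNE2 j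
      rw [hone, hneg] at this
      linarith
    -- counting
    set T := Finset.univ.filter (fun i : Fin m => σ₁ i ≠ 0) with hT
    have hsub : (Finset.univ : Finset (Fin nJ)) ⊆ T.biUnion S := by
      intro j _
      obtain ⟨i, hi1, hi2⟩ := hsupcov j
      exact Finset.mem_biUnion.mpr ⟨i, Finset.mem_filter.mpr ⟨Finset.mem_univ i, hi1⟩, hi2⟩
    have hcard : nJ ≤ 3 * T.card := by
      calc nJ = (Finset.univ : Finset (Fin nJ)).card := by simp
        _ ≤ (T.biUnion S).card := Finset.card_le_card hsub
        _ ≤ ∑ i ∈ T, (S i).card := Finset.card_biUnion_le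
        _ = 3 * T.card := by rw [Finset.sum_congr rfl (fun i _ => hS3 i), Finset.sum_const]; ring
    omega
end
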